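/- arXiv:1503.06650 — 6 statements merged into one kernel-verified Lean document; each statement's English description precedes it below -/
import Mathlib

section
/- Let g_1, …, g_k ∈ ℝ[x_1,…,x_n] and let X = {x ∈ ℝⁿ : g_i(x) ≥ 0, i = 1,…,k}. Suppose there exist N ≥ 0 and d_0 > 0 such that the polynomial N − ‖x‖² belongs to the truncated quadratic module Q_{d_0}(X). Then every polynomial p ∈ ℝ[x_1,…,x_n] that is strictly positive at every point of X belongs to Q_d(X) for some d ≥ 0. (Putinar's Positivstellensatz.) -/
/-!
Let `M` be the quadratic module generated by the `g i`. The hypothesis makes `M` archimedean: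
`N - ∑ xᵢ²` bounds every variable, and the elements `f` with `r ± f ∈ M` for some real `r`
form a subalgebra. If `-1 ∈ M - p·ΣA²`, then `p s = 1 + q` with `s` a sum of squares and
`q ∈ M`, and the archimedean property turns this certificate into `p ∈ M` by lowering the
constant `l` in `p + l ∈ M` in steps of fixed size. Otherwise Zorn's lemma gives a proper
quadratic module `Q ⊇ M - p·ΣA²` with `Q ∪ -Q = A`; then `f ↦ inf {r | r - f ∈ Q}` is an
`ℝ`-algebra homomorphism on `ℝ[x]`, i.e. evaluation at a point of `X`, where `p ≤ 0`.
-/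

open MvPolynomial

/-- `SOSdeg k` is the set of sums of squares of polynomials of degree at most `k`
(hence the set of SOS polynomials of degree at most `2k`). -/
def SOSdeg {n : ℕ} (k : ℕ) : Set (MvPolynomial (Fin n) ℝ) :=
  {p | ∃ m : Multiset (MvPolynomial (Fin n) ℝ),
    (∀ q ∈ m, q.totalDegree ≤ k) ∧ p = (m.map (fun q => q ^ 2)).sum}

/-- `QModule g d` is the truncated quadratic module of degree `d` associated to the
polynomials `g i`: polynomials of the form `s₀ + ∑ i, g i * s i` where `s₀` is an SOS
of degree at most `2⌊d/2⌋` and `s i` is an SOS of degree at most `2⌊(d - deg g i)/2⌋`. -/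
def QModule {n k : ℕ} (g : Fin k → MvPolynomial (Fin n) ℝ) (d : ℕ) :
    Set (MvPolynomial (Fin n) ℝ) :=
  {p | ∃ s₀ : MvPolynomial (Fin n) ℝ, ∃ s : Fin k → MvPolynomial (Fin n) ℝ,
    s₀ ∈ SOSdeg (d / 2) ∧ (∀ i, s i ∈ SOSdeg ((d - (g i).totalDegree) / 2)) ∧
    p = s₀ + ∑ i, g i * s i}

open scoped algebraMap

variable {A : Type*} [CommRing A]

structure IsQuadraticModule (Q : Set A) : Prop where
  add_mem {a b : A} : a ∈ Q → b ∈ Q → a + b ∈ Q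
  one_mem : 1 ∈ Q
  sq_mul_mem (f : A) {a : A} : a ∈ Q → f ^ 2 * a ∈ Q

def quadraticAdjoin (Q : Set A) (b : A) : Set A :=
  {f | ∃ q ∈ Q, ∃ s, IsSumSq s ∧ f = q + b * s}

theorem subset_quadraticAdjoin (Q : Set A) (b : A) : Q ⊆ quadraticAdjoin Q b :=
  fun q hq => ⟨q, hq, 0, .zero, by ring⟩

theorem isQuadraticModule_quadraticAdjoin {Q : Set A} (hQ : IsQuadraticModule Q) (b : A) :
    IsQuadraticModule (quadraticAdjoin Q b) where
  add_mem := by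
    rintro _ _ ⟨q₁, hq₁, s₁, hs₁, rfl⟩ ⟨q₂, hq₂, s₂, hs₂, rfl⟩
    exact ⟨q₁ + q₂, hQ.add_mem hq₁ hq₂, s₁ + s₂, hs₁.add hs₂, by ring⟩
  one_mem := ⟨1, hQ.one_mem, 0, .zero, by ring⟩
  sq_mul_mem f := by
    rintro _ ⟨q, hq, s, hs, rfl⟩
    exact ⟨f ^ 2 * q, hQ.sq_mul_mem f hq, f ^ 2 * s, (IsSquare.sq f).isSumSq.mul hs, by ring⟩

theorem isQuadraticModule_sUnion {c : Set (Set A)} (hc : ∀ Q ∈ c, IsQuadraticModule Q)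
    (hchain : IsChain (· ⊆ ·) c) (hne : c.Nonempty) : IsQuadraticModule (⋃₀ c) where
  add_mem := by
    rintro a b ⟨Q₁, hQ₁, ha⟩ ⟨Q₂, hQ₂, hb⟩
    rcases hchain.total hQ₁ hQ₂ with h | h
    · exact ⟨Q₂, hQ₂, (hc Q₂ hQ₂).add_mem (h ha) hb⟩
    · exact ⟨Q₁, hQ₁, (hc Q₁ hQ₁).add_mem ha (h hb)⟩
  one_mem := hne.elim fun Q hQ => ⟨Q, hQ, (hc Q hQ).one_mem⟩
  sq_mul_mem f := by
    rintro a ⟨Q, hQ, ha⟩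
    exact ⟨Q, hQ, (hc Q hQ).sq_mul_mem f ha⟩

namespace IsQuadraticModule

variable {Q : Set A} (hQ : IsQuadraticModule Q)
include hQ

theorem sq_mem (f : A) : f ^ 2 ∈ Q := by
  simpa using hQ.sq_mul_mem f hQ.one_mem

theorem zero_mem : (0 : A) ∈ Q := by
  simpa using hQ.sq_mem 0

theorem isSumSq_mul_mem {s a : A} (hs : IsSumSq s) (ha : a ∈ Q) : s * a ∈ Q := by
  induction hs with
  | zero => simpa using hQ.zero_mem
  | sq_add b _ ih => simpa [add_mul, ← sq] using hQ.add_mem (hQ.sq_mul_mem b ha) ih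

theorem isSumSq_mem {s : A} (hs : IsSumSq s) : s ∈ Q := by
  simpa using hQ.isSumSq_mul_mem hs hQ.one_mem

theorem mem_quadraticAdjoin_self (b : A) : b ∈ quadraticAdjoin Q b :=
  ⟨0, hQ.zero_mem, 1, .one, by ring⟩

end IsQuadraticModule

section Span

variable {ι : Type*} [Fintype ι]

def quadraticModuleSpan (g : ι → A) : Set A :=
  {f | ∃ (s₀ : A) (s : ι → A), IsSumSq s₀ ∧ (∀ i, IsSumSq (s i)) ∧ f = s₀ + ∑ i, g i * s i}

theorem isQuadraticModule_quadraticModuleSpan (g : ι → A) :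
    IsQuadraticModule (quadraticModuleSpan g) where
  add_mem := by
    rintro _ _ ⟨s₀, s, hs₀, hs, rfl⟩ ⟨t₀, t, ht₀, ht, rfl⟩
    refine ⟨s₀ + t₀, s + t, hs₀.add ht₀, fun i => (hs i).add (ht i), ?_⟩
    simp only [Pi.add_apply, mul_add, Finset.sum_add_distrib]
    ring
  one_mem := ⟨1, 0, .one, fun _ => .zero, by simp⟩
  sq_mul_mem f := by
    rintro _ ⟨s₀, s, hs₀, hs, rfl⟩
    refine ⟨f ^ 2 * s₀, fun i => f ^ 2 * s i, (IsSquare.sq f).isSumSq.mul hs₀,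
      fun i => (IsSquare.sq f).isSumSq.mul (hs i), ?_⟩
    simp only [mul_add, Finset.mul_sum, mul_left_comm]

theorem mem_quadraticModuleSpan [DecidableEq ι] (g : ι → A) (i : ι) :
    g i ∈ quadraticModuleSpan g := by
  refine ⟨0, Pi.single i 1, .zero, fun j => ?_, by simp [Pi.single_apply]⟩
  rcases eq_or_ne j i with rfl | hj <;> simp [*]

end Span

section RealAlgebra

variable [Algebra ℝ A]

namespace IsQuadraticModule

variable {Q : Set A} (hQ : IsQuadraticModule Q)
include hQ

theorem coe_mul_mem {c : ℝ} (hc : 0 ≤ c) {a : A} (ha : a ∈ Q) : (c : A) * a ∈ Q := by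
  simpa [← algebraMap.coe_pow, Real.sq_sqrt hc] using hQ.sq_mul_mem (√c : A) ha

theorem coe_mem {c : ℝ} (hc : 0 ≤ c) : (c : A) ∈ Q := by
  simpa using hQ.coe_mul_mem hc hQ.one_mem

theorem mem_of_coe_mul_mem {c : ℝ} (hc : 0 < c) {a : A} (h : (c : A) * a ∈ Q) : a ∈ Q := by
  simpa [← mul_assoc, ← algebraMap.coe_mul, hc.ne'] using hQ.coe_mul_mem (inv_nonneg.2 hc.le) h

theorem coe_add_mem_of_le {r s : ℝ} {a : A} (h : (r : A) + a ∈ Q) (hrs : r ≤ s) :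
    (s : A) + a ∈ Q := by
  convert hQ.add_mem (hQ.coe_mem (sub_nonneg.2 hrs)) h using 1
  push_cast
  ring

theorem nonneg_of_coe_mem (h1 : (-1 : A) ∉ Q) {c : ℝ} (hc : (c : A) ∈ Q) : 0 ≤ c := by
  by_contra! hneg
  refine h1 ?_
  simpa [← mul_assoc, ← algebraMap.coe_mul, hneg.ne] using
    hQ.coe_mul_mem (inv_nonneg.2 (neg_nonneg.2 hneg.le)) hc

theorem mul_mem_of_mem_of_neg_mem {s : A} (hs : s ∈ Q) (hs' : -s ∈ Q) (f : A) : f * s ∈ Q := by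
  refine hQ.mem_of_coe_mul_mem (c := 4) (by norm_num) ?_
  convert hQ.add_mem (hQ.sq_mul_mem (f + 1) hs) (hQ.sq_mul_mem (f - 1) hs') using 1
  push_cast [map_ofNat]
  ring

theorem sq_sub_sq_mem {u : ℝ} (hu : 0 < u) {f : A} (h₁ : (u : A) - f ∈ Q)
    (h₂ : (u : A) + f ∈ Q) : (u : A) ^ 2 - f ^ 2 ∈ Q := by
  refine hQ.mem_of_coe_mul_mem (c := 2 * u) (by positivity) ?_
  convert hQ.add_mem (hQ.sq_mul_mem ((u : A) - f) h₂) (hQ.sq_mul_mem ((u : A) + f) h₁) using 1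
  push_cast [map_ofNat]
  ring

theorem neg_one_mem_of_mem_quadraticAdjoin {a : A} (h₁ : -1 ∈ quadraticAdjoin Q a)
    (h₂ : -1 ∈ quadraticAdjoin Q (-a)) : -1 ∈ Q := by
  obtain ⟨q₁, hq₁, s₁, hs₁, h₁⟩ := h₁
  obtain ⟨q₂, hq₂, s₂, hs₂, h₂⟩ := h₂
  have hneg : -s₁ ∈ Q := by
    convert hQ.add_mem (hQ.isSumSq_mem hs₂)
      (hQ.add_mem (hQ.isSumSq_mul_mem hs₁ hq₂) (hQ.isSumSq_mul_mem hs₂ hq₁)) using 1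
    linear_combination s₂ * h₁ + s₁ * h₂
  rw [h₁]
  exact hQ.add_mem hq₁ (hQ.mul_mem_of_mem_of_neg_mem (hQ.isSumSq_mem hs₁) hneg a)

end IsQuadraticModule

theorem exists_mem_or_neg_mem_superset {Q₀ : Set A} (hQ₀ : IsQuadraticModule Q₀)
    (h1 : (-1 : A) ∉ Q₀) :
    ∃ Q, Q₀ ⊆ Q ∧ IsQuadraticModule Q ∧ (-1 : A) ∉ Q ∧ ∀ f, f ∈ Q ∨ -f ∈ Q := by
  obtain ⟨Q, hQ₀Q, hmax⟩ := zorn_subset_nonempty {Q : Set A | IsQuadraticModule Q ∧ -1 ∉ Q}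
    (fun c hc hchain hne => ⟨⋃₀ c, ⟨isQuadraticModule_sUnion (fun Q hQ => (hc hQ).1) hchain hne,
      fun ⟨Q, hQ, h⟩ => (hc hQ).2 h⟩, fun _ => Set.subset_sUnion_of_mem⟩) Q₀ ⟨hQ₀, h1⟩
  obtain ⟨hQ, hQ1⟩ := hmax.prop
  have hmem (b : A) (hb : -1 ∉ quadraticAdjoin Q b) : b ∈ Q :=
    hmax.le_of_ge ⟨isQuadraticModule_quadraticAdjoin hQ b, hb⟩ (subset_quadraticAdjoin Q b)
      (hQ.mem_quadraticAdjoin_self b)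
  refine ⟨Q, hQ₀Q, hQ, hQ1, fun f => ?_⟩
  by_contra! h
  exact hQ1 (hQ.neg_one_mem_of_mem_quadraticAdjoin (not_not.1 (mt (hmem f) h.1))
    (not_not.1 (mt (hmem (-f)) h.2)))

def IsArchimedean (Q : Set A) : Prop :=
  ∀ f : A, ∃ r : ℝ, (r : A) - f ∈ Q

theorem IsArchimedean.mono {Q Q' : Set A} (h : Q ⊆ Q') (hQ : IsArchimedean Q) :
    IsArchimedean Q' :=
  fun f => (hQ f).imp fun _ hr => h hr

def IsBounded (Q : Set A) (f : A) : Prop :=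
  ∃ r : ℝ, (r : A) - f ∈ Q ∧ (r : A) + f ∈ Q

theorem IsBounded.neg {Q : Set A} {f : A} (h : IsBounded Q f) : IsBounded Q (-f) :=
  h.imp fun _ ⟨h₁, h₂⟩ => ⟨by rwa [sub_neg_eq_add], by rwa [← sub_eq_add_neg]⟩

namespace IsQuadraticModule

variable {Q : Set A} (hQ : IsQuadraticModule Q)
include hQ

theorem isBounded_coe (c : ℝ) : IsBounded Q c :=
  ⟨|c|, by rw [← algebraMap.coe_sub]; exact hQ.coe_mem (sub_nonneg.2 (le_abs_self c)),
    by rw [← algebraMap.coe_add]; exact hQ.coe_mem (neg_le_iff_add_nonneg.1 (neg_le_abs c))⟩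

theorem isBounded_add {f g : A} (hf : IsBounded Q f) (hg : IsBounded Q g) :
    IsBounded Q (f + g) := by
  obtain ⟨r, hr₁, hr₂⟩ := hf
  obtain ⟨s, hs₁, hs₂⟩ := hg
  refine ⟨r + s, ?_, ?_⟩
  · convert hQ.add_mem hr₁ hs₁ using 1
    push_cast
    ring
  · convert hQ.add_mem hr₂ hs₂ using 1
    push_cast
    ring

theorem isBounded_sq {f : A} (hf : IsBounded Q f) : IsBounded Q (f ^ 2) := by
  obtain ⟨r, hr₁, hr₂⟩ := hf
  have hu : 0 < max r 1 := lt_max_of_lt_right one_pos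
  refine ⟨max r 1 ^ 2, ?_, hQ.add_mem (hQ.coe_mem (by positivity)) (hQ.sq_mem f)⟩
  rw [algebraMap.coe_pow]
  refine hQ.sq_sub_sq_mem hu ?_ (hQ.coe_add_mem_of_le hr₂ (le_max_left r 1))
  rw [sub_eq_add_neg] at hr₁ ⊢
  exact hQ.coe_add_mem_of_le hr₁ (le_max_left r 1)

theorem isBounded_of_coe_mul {c : ℝ} (hc : 0 < c) {f : A} (h : IsBounded Q ((c : A) * f)) :
    IsBounded Q f := by
  obtain ⟨r, h₁, h₂⟩ := h
  refine ⟨r / c, hQ.mem_of_coe_mul_mem hc ?_, hQ.mem_of_coe_mul_mem hc ?_⟩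
  · rwa [mul_sub, ← algebraMap.coe_mul, mul_div_cancel₀ _ hc.ne']
  · rwa [mul_add, ← algebraMap.coe_mul, mul_div_cancel₀ _ hc.ne']

theorem isBounded_mul {f g : A} (hf : IsBounded Q f) (hg : IsBounded Q g) :
    IsBounded Q (f * g) := by
  refine hQ.isBounded_of_coe_mul two_pos ?_
  convert hQ.isBounded_add (hQ.isBounded_sq (hQ.isBounded_add hf hg))
    (hQ.isBounded_add (hQ.isBounded_sq hf).neg (hQ.isBounded_sq hg).neg) using 1
  push_cast [map_ofNat]
  ring

def boundedSubalgebra : Subalgebra ℝ A where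
  carrier := {f | IsBounded Q f}
  mul_mem' := hQ.isBounded_mul
  add_mem' := hQ.isBounded_add
  algebraMap_mem' := hQ.isBounded_coe

theorem isArchimedean_of_adjoin_eq_top {s : Set A} (hs : Algebra.adjoin ℝ s = ⊤)
    (hb : ∀ x ∈ s, IsBounded Q x) : IsArchimedean Q := fun f =>
  have hf : f ∈ hQ.boundedSubalgebra :=
    Algebra.adjoin_le (S := hQ.boundedSubalgebra) hb (hs ▸ Algebra.mem_top)
  hf.imp fun _ hr => hr.1

theorem isBounded_of_coe_sub_sum_sq_mem {ι : Type*} [Fintype ι] {x : ι → A} {N : ℝ}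
    (h : (N : A) - ∑ i, x i ^ 2 ∈ Q) (i : ι) : IsBounded Q (x i) := by
  classical
  have hi : (N : A) - x i ^ 2 ∈ Q := by
    convert hQ.add_mem h (hQ.isSumSq_mem (IsSumSq.sum_sq (Finset.univ.erase i) x)) using 1
    rw [← Finset.add_sum_erase _ _ (Finset.mem_univ i)]
    ring
  refine hQ.isBounded_of_coe_mul two_pos ⟨N + 1, ?_, ?_⟩
  · convert hQ.add_mem (hQ.sq_mem (x i - 1)) hi using 1
    push_cast [map_ofNat]
    ring
  · convert hQ.add_mem (hQ.sq_mem (x i + 1)) hi using 1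
    push_cast [map_ofNat]
    ring

end IsQuadraticModule

theorem exists_nonpos_mem_of_sub_mem {S : Set ℝ} {ε : ℝ} (hε : 0 < ε)
    (hS : ∀ l ∈ S, 0 < l → l - ε ∈ S) {l₀ : ℝ} (h₀ : l₀ ∈ S) : ∃ l ≤ 0, l ∈ S := by
  obtain ⟨j, hj⟩ := exists_nat_ge (l₀ / ε)
  induction j generalizing l₀ with
  | zero => exact ⟨l₀, by simpa using (div_le_iff₀ hε).1 hj, h₀⟩
  | succ j ih =>
    by_cases hl : l₀ ≤ 0
    · exact ⟨l₀, hl, h₀⟩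
    · refine ih (hS l₀ h₀ (not_le.1 hl)) ?_
      rw [sub_div, div_self hε.ne']
      push_cast at hj
      linarith

namespace IsQuadraticModule

variable {Q : Set A} (hQ : IsQuadraticModule Q)
include hQ

theorem exists_pos_one_sub_coe_mul_mem (harch : IsArchimedean Q) (f : A) :
    ∃ ε : ℝ, 0 < ε ∧ 1 - (ε : A) * f ∈ Q := by
  obtain ⟨r, hr⟩ := harch f
  have hu : 0 < max r 1 := lt_max_of_lt_right one_pos
  refine ⟨(max r 1)⁻¹, inv_pos.2 hu, ?_⟩
  rw [sub_eq_add_neg] at hr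
  convert hQ.coe_mul_mem (inv_nonneg.2 hu.le) (hQ.coe_add_mem_of_le hr (le_max_left r 1)) using 1
  rw [mul_add, ← algebraMap.coe_mul, inv_mul_cancel₀ hu.ne', algebraMap.coe_one, mul_neg,
    sub_eq_add_neg]

theorem add_coe_sub_mem {p s q : A} (hs : IsSumSq s) (hq : q ∈ Q) (hps : p * s = 1 + q)
    {ε : ℝ} (hε : 0 ≤ ε) (hεs : 1 - (ε : A) * (s * (1 + q)) ∈ Q)
    {l : ℝ} (hl : 0 ≤ l) (hpl : p + (l : A) ∈ Q) : p + ((l - ε : ℝ) : A) ∈ Q := by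
  have hs' : s + s * (1 - (ε : A) * (s * (1 + q))) + (ε : A) * (s ^ 2 * q) ∈ Q :=
    hQ.add_mem (hQ.add_mem (hQ.isSumSq_mem hs) (hQ.isSumSq_mul_mem hs hεs))
      (hQ.coe_mul_mem hε (hQ.sq_mul_mem s hq))
  -- `(1 - ε s)² p = p - 2ε (1 + q) + ε² s (1 + q)` since `p s = 1 + q`
  convert hQ.add_mem (hQ.add_mem (hQ.sq_mul_mem (1 - (ε : A) * s) hpl)
    (hQ.coe_mul_mem (by positivity : (0 : ℝ) ≤ 2 * ε) hq))
    (hQ.add_mem (hQ.coe_mul_mem hε hεs) (hQ.coe_mul_mem (mul_nonneg hl hε) hs')) using 1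
  push_cast [map_ofNat]
  linear_combination (2 * (ε : A) - (ε : A) ^ 2 * s) * hps

theorem mem_of_mul_eq_one_add (harch : IsArchimedean Q) {p s q : A} (hs : IsSumSq s)
    (hq : q ∈ Q) (hps : p * s = 1 + q) : p ∈ Q := by
  obtain ⟨ε, hε, hεs⟩ := hQ.exists_pos_one_sub_coe_mul_mem harch (s * (1 + q))
  obtain ⟨l₀, hl₀⟩ := harch (-p)
  obtain ⟨l, hl, hpl⟩ := exists_nonpos_mem_of_sub_mem (S := {l : ℝ | p + (l : A) ∈ Q}) hε
    (fun l hpl hl => hQ.add_coe_sub_mem hs hq hps hε.le hεs hl.le hpl)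
    (by rwa [Set.mem_ofPred_eq, add_comm, ← sub_neg_eq_add])
  simpa using hQ.add_mem hpl (hQ.coe_mem (neg_nonneg.2 hl))

end IsQuadraticModule

structure IsTotalArchimedean (Q : Set A) : Prop extends IsQuadraticModule Q where
  neg_one_notMem : (-1 : A) ∉ Q
  isArchimedean : IsArchimedean Q
  mem_or_neg_mem (f : A) : f ∈ Q ∨ -f ∈ Q

noncomputable def cutValue (Q : Set A) (f : A) : ℝ :=
  sInf {r : ℝ | (r : A) - f ∈ Q}

namespace IsTotalArchimedean

variable {Q : Set A} (hQ : IsTotalArchimedean Q)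
include hQ

theorem le_of_sub_mem {f : A} {r s : ℝ} (h₁ : f - (s : A) ∈ Q) (h₂ : (r : A) - f ∈ Q) : s ≤ r := by
  refine sub_nonneg.1 (hQ.nonneg_of_coe_mem hQ.neg_one_notMem ?_)
  simpa using hQ.add_mem h₂ h₁

theorem cutValue_le {f : A} {r : ℝ} (h : (r : A) - f ∈ Q) : cutValue Q f ≤ r := by
  obtain ⟨ℓ, hℓ⟩ := hQ.isArchimedean (-f)
  refine csInf_le ⟨-ℓ, fun s hs => hQ.le_of_sub_mem ?_ hs⟩ h
  simpa [add_comm] using hℓ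

theorem coe_sub_mem_of_cutValue_lt {f : A} {r : ℝ} (h : cutValue Q f < r) : (r : A) - f ∈ Q := by
  obtain ⟨s, hs : (s : A) - f ∈ Q, hsr⟩ := exists_lt_of_csInf_lt (hQ.isArchimedean f) h
  rw [sub_eq_add_neg] at hs ⊢
  exact hQ.coe_add_mem_of_le hs hsr.le

theorem sub_coe_mem_of_lt_cutValue {f : A} {r : ℝ} (h : r < cutValue Q f) : f - (r : A) ∈ Q :=
  (hQ.mem_or_neg_mem (f - r)).resolve_right fun hr =>
    h.not_ge (hQ.cutValue_le (by rwa [neg_sub] at hr))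

theorem le_cutValue {f : A} {r : ℝ} (h : f - (r : A) ∈ Q) : r ≤ cutValue Q f :=
  le_csInf (hQ.isArchimedean f) fun _ hs => hQ.le_of_sub_mem h hs

theorem cutValue_eq {f : A} {c : ℝ} (hlt : ∀ r < c, f - (r : A) ∈ Q)
    (hgt : ∀ r > c, (r : A) - f ∈ Q) : cutValue Q f = c :=
  le_antisymm (le_of_forall_gt_imp_ge_of_dense fun r hr => hQ.cutValue_le (hgt r hr))
    (le_of_forall_lt_imp_le_of_dense fun r hr => hQ.le_cutValue (hlt r hr))

theorem cutValue_coe (c : ℝ) : cutValue Q c = c :=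
  hQ.cutValue_eq (fun r hr => by rw [← algebraMap.coe_sub]; exact hQ.coe_mem (by linarith))
    (fun r hr => by rw [← algebraMap.coe_sub]; exact hQ.coe_mem (by linarith))

theorem cutValue_add (f g : A) : cutValue Q (f + g) = cutValue Q f + cutValue Q g := by
  refine hQ.cutValue_eq (fun r hr => ?_) (fun r hr => ?_)
  · have h₁ := hQ.sub_coe_mem_of_lt_cutValue (f := f)
      (r := cutValue Q f - (cutValue Q f + cutValue Q g - r) / 2) (by linarith)
    have h₂ := hQ.sub_coe_mem_of_lt_cutValue (f := g)
      (r := r - (cutValue Q f - (cutValue Q f + cutValue Q g - r) / 2)) (by linarith)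
    convert hQ.add_mem h₁ h₂ using 1
    push_cast
    ring
  · have h₁ := hQ.coe_sub_mem_of_cutValue_lt (f := f)
      (r := cutValue Q f + (r - (cutValue Q f + cutValue Q g)) / 2) (by linarith)
    have h₂ := hQ.coe_sub_mem_of_cutValue_lt (f := g)
      (r := r - (cutValue Q f + (r - (cutValue Q f + cutValue Q g)) / 2)) (by linarith)
    convert hQ.add_mem h₁ h₂ using 1
    push_cast
    ring

theorem cutValue_sq (f : A) : cutValue Q (f ^ 2) = cutValue Q f ^ 2 := by
  set t := cutValue Q f
  refine hQ.cutValue_eq (fun r hr => ?_) (fun r hr => ?_)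
  · rcases lt_or_ge r 0 with hr0 | hr0
    · rw [sub_eq_add_neg, ← algebraMap.coe_neg]
      exact hQ.add_mem (hQ.sq_mem f) (hQ.coe_mem (by linarith))
    have hu : √r < |t| := by
      rw [← Real.sqrt_sq_eq_abs]
      exact Real.sqrt_lt_sqrt hr0 hr
    have hr' : (r : A) = (√r : A) ^ 2 := by rw [← algebraMap.coe_pow, Real.sq_sqrt hr0]
    have h2u : (0 : ℝ) ≤ 2 * √r := by positivity
    rcases le_or_gt 0 t with ht | ht
    · have h := hQ.sub_coe_mem_of_lt_cutValue (r := √r) (by rwa [abs_of_nonneg ht] at hu)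
      convert hQ.add_mem (hQ.sq_mem (f - √r)) (hQ.coe_mul_mem h2u h) using 1
      rw [hr']
      push_cast [map_ofNat]
      ring
    · have h := hQ.coe_sub_mem_of_cutValue_lt (r := -√r) (by rw [abs_of_neg ht] at hu; linarith)
      convert hQ.add_mem (hQ.sq_mem (f + √r)) (hQ.coe_mul_mem h2u h) using 1
      rw [hr']
      push_cast [map_ofNat]
      ring
  · have hu : |t| < √r := by
      rw [← Real.sqrt_sq_eq_abs]
      exact Real.sqrt_lt_sqrt (sq_nonneg t) hr
    have h₁ := hQ.coe_sub_mem_of_cutValue_lt (r := √r) ((le_abs_self t).trans_lt hu)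
    have h₂ := hQ.sub_coe_mem_of_lt_cutValue (r := -√r) (by linarith [neg_abs_le t])
    rw [algebraMap.coe_neg, sub_neg_eq_add, add_comm] at h₂
    have h := hQ.sq_sub_sq_mem ((abs_nonneg t).trans_lt hu) h₁ h₂
    rwa [← algebraMap.coe_pow, Real.sq_sqrt (by linarith [sq_nonneg t])] at h

theorem cutValue_mul (f g : A) : cutValue Q (f * g) = cutValue Q f * cutValue Q g := by
  have h := hQ.cutValue_sq (f + g)
  rw [show (f + g) ^ 2 = f ^ 2 + (f * g + f * g) + g ^ 2 by ring, hQ.cutValue_add,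
    hQ.cutValue_add, hQ.cutValue_add, hQ.cutValue_sq, hQ.cutValue_sq, hQ.cutValue_add f g] at h
  linear_combination h / 2

noncomputable def toAlgHom : A →ₐ[ℝ] ℝ where
  toFun := cutValue Q
  map_one' := by simpa using hQ.cutValue_coe 1
  map_mul' := hQ.cutValue_mul
  map_zero' := by simpa using hQ.cutValue_coe 0
  map_add' := hQ.cutValue_add
  commutes' := hQ.cutValue_coe

theorem toAlgHom_nonneg {f : A} (h : f ∈ Q) : 0 ≤ hQ.toAlgHom f :=
  hQ.le_cutValue (by simpa using h)

end IsTotalArchimedean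

theorem IsQuadraticModule.exists_algHom_nonneg {Q : Set A} (hQ : IsQuadraticModule Q)
    (harch : IsArchimedean Q) (h1 : (-1 : A) ∉ Q) : ∃ φ : A →ₐ[ℝ] ℝ, ∀ f ∈ Q, 0 ≤ φ f := by
  obtain ⟨Q', hQQ', hQ', hQ'1, htot⟩ := exists_mem_or_neg_mem_superset hQ h1
  exact ⟨IsTotalArchimedean.toAlgHom ⟨hQ', hQ'1, harch.mono hQQ', htot⟩,
    fun f hf => IsTotalArchimedean.toAlgHom_nonneg _ (hQQ' hf)⟩

theorem IsQuadraticModule.mem_of_forall_algHom_pos {M : Set A} (hM : IsQuadraticModule M)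
    (harch : IsArchimedean M) {p : A} (hp : ∀ φ : A →ₐ[ℝ] ℝ, (∀ f ∈ M, 0 ≤ φ f) → 0 < φ p) :
    p ∈ M := by
  by_cases h : -1 ∈ quadraticAdjoin M (-p)
  · obtain ⟨q, hq, s, hs, h⟩ := h
    exact hM.mem_of_mul_eq_one_add harch hs hq (by linear_combination h)
  · obtain ⟨φ, hφ⟩ := (isQuadraticModule_quadraticAdjoin hM (-p)).exists_algHom_nonneg
      (harch.mono (subset_quadraticAdjoin M (-p))) h
    have hpos := hp φ fun f hf => hφ f (subset_quadraticAdjoin M (-p) hf)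
    have hneg := hφ (-p) (hM.mem_quadraticAdjoin_self (-p))
    rw [map_neg] at hneg
    linarith

end RealAlgebra

theorem isSumSq_iff_exists_multiset {R : Type*} [CommSemiring R] {p : R} :
    IsSumSq p ↔ ∃ m : Multiset R, p = (m.map (· ^ 2)).sum := by
  refine ⟨fun hp => ?_, fun ⟨m, hm⟩ => hm ▸ ?_⟩
  · induction hp with
    | zero => exact ⟨0, by simp⟩
    | sq_add a _ ih =>
      obtain ⟨m, rfl⟩ := ih
      exact ⟨a ::ₘ m, by simp [sq]⟩
  · clear hm
    induction m using Multiset.induction with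
    | empty => exact .zero
    | cons a m ih => simpa [sq] using ih.sq_add a

section Polynomial

variable {n : ℕ}

theorem SOSdeg_mono {j k : ℕ} (h : j ≤ k) : (SOSdeg j : Set (MvPolynomial (Fin n) ℝ)) ⊆ SOSdeg k :=
  fun _ ⟨m, hm, hp⟩ => ⟨m, fun q hq => (hm q hq).trans h, hp⟩

theorem isSumSq_iff_exists_mem_SOSdeg {p : MvPolynomial (Fin n) ℝ} :
    IsSumSq p ↔ ∃ k, p ∈ SOSdeg k := by
  rw [isSumSq_iff_exists_multiset]
  refine ⟨fun ⟨m, hm⟩ => ⟨(m.map totalDegree).sup, m, fun q hq => ?_, hm⟩,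
    fun ⟨_, m, _, hm⟩ => ⟨m, hm⟩⟩
  exact Multiset.le_sup (Multiset.mem_map_of_mem _ hq)

theorem iUnion_QModule {k : ℕ} (g : Fin k → MvPolynomial (Fin n) ℝ) :
    ⋃ d, QModule g d = quadraticModuleSpan g := by
  ext f
  refine ⟨fun hf => ?_, fun ⟨s₀, s, hs₀, hs, hf⟩ => ?_⟩
  · obtain ⟨d, s₀, s, hs₀, hs, rfl⟩ := Set.mem_iUnion.1 hf
    exact ⟨s₀, s, isSumSq_iff_exists_mem_SOSdeg.2 ⟨_, hs₀⟩,
      fun i => isSumSq_iff_exists_mem_SOSdeg.2 ⟨_, hs i⟩, rfl⟩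
  obtain ⟨k₀, hk₀⟩ := isSumSq_iff_exists_mem_SOSdeg.1 hs₀
  choose m hm using fun i => isSumSq_iff_exists_mem_SOSdeg.1 (hs i)
  set K := k₀ + ∑ i, (m i + (g i).totalDegree)
  have hK (i : Fin k) : m i + (g i).totalDegree ≤ K :=
    (Finset.single_le_sum (fun j _ => Nat.zero_le (m j + (g j).totalDegree))
      (Finset.mem_univ i)).trans (Nat.le_add_left _ _)
  refine Set.mem_iUnion.2 ⟨3 * K, s₀, s, SOSdeg_mono (by omega) hk₀,
    fun i => SOSdeg_mono ?_ (hm i), hf⟩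
  have := hK i
  omega

end Polynomial

theorem MvPolynomial.isArchimedean_of_coe_sub_sum_X_sq_mem {σ : Type*} [Fintype σ]
    {Q : Set (MvPolynomial σ ℝ)} (hQ : IsQuadraticModule Q) {N : ℝ}
    (h : (N : MvPolynomial σ ℝ) - ∑ i, X i ^ 2 ∈ Q) : IsArchimedean Q :=
  hQ.isArchimedean_of_adjoin_eq_top adjoin_range_X (by
    rintro _ ⟨i, rfl⟩
    exact hQ.isBounded_of_coe_sub_sum_sq_mem h i)

theorem putinar_positivstellensatz_general {n k : ℕ} (g : Fin k → MvPolynomial (Fin n) ℝ)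
    (X : Set (Fin n → ℝ)) (hX : X = {x | ∀ i, 0 ≤ MvPolynomial.eval x (g i)})
    (N : ℝ) (d₀ : ℕ)
    (hArch : (MvPolynomial.C N - ∑ i, MvPolynomial.X i ^ 2) ∈ QModule g d₀)
    (p : MvPolynomial (Fin n) ℝ)
    (hp : ∀ x ∈ X, 0 < MvPolynomial.eval x p) :
    ∃ d : ℕ, p ∈ QModule g d := by
  have hM := isQuadraticModule_quadraticModuleSpan g
  have hN : (N : MvPolynomial (Fin n) ℝ) - ∑ i, MvPolynomial.X i ^ 2 ∈ quadraticModuleSpan g :=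
    iUnion_QModule g ▸ Set.mem_iUnion_of_mem d₀ hArch
  rw [← Set.mem_iUnion, iUnion_QModule]
  refine hM.mem_of_forall_algHom_pos (isArchimedean_of_coe_sub_sum_X_sq_mem hM hN)
    fun φ hφ => ?_
  have hφ_eval (f : MvPolynomial (Fin n) ℝ) : φ f = eval (φ ∘ MvPolynomial.X) f :=
    DFunLike.congr_fun (aeval_unique φ) f
  rw [hφ_eval]
  refine hp _ (hX ▸ fun i => ?_)
  rw [← hφ_eval]
  exact hφ _ (mem_quadraticModuleSpan g i)

/-- **Putinar's Positivstellensatz.** -/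
theorem putinar_positivstellensatz {n k : ℕ} (g : Fin k → MvPolynomial (Fin n) ℝ)
    (X : Set (Fin n → ℝ)) (hX : X = {x | ∀ i, 0 ≤ MvPolynomial.eval x (g i)})
    (N : ℝ) (hN : 0 ≤ N) (d₀ : ℕ) (hd₀ : 0 < d₀)
    (hArch : (MvPolynomial.C N - ∑ i, MvPolynomial.X i ^ 2) ∈ QModule g d₀)
    (p : MvPolynomial (Fin n) ℝ)
    (hp : ∀ x ∈ X, 0 < MvPolynomial.eval x p) :
    ∃ d : ℕ, p ∈ QModule g d :=
  putinar_positivstellensatz_general g X hX N d₀ hArch p hp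
end

section
/- Let g_1, …, g_k ∈ ℝ[x_1,…,x_n], let X = {x ∈ ℝⁿ : g_i(x) ≥ 0, i = 1,…,k}, and suppose there exist N ≥ 0 and d_0 > 0 such that N − ‖x‖² ∈ Q_{d_0}(X) (in particular X is compact). Then for every continuous function f : X → ℝ with f ≥ 0 on X and every ε > 0, there exist d ≥ 0 and a polynomial p ∈ Q_d(X) such that sup_{x ∈ X} |f(x) − p(x)| < ε. -/
open MvPolynomial

/-!
The certificate `N - ‖x‖² ∈ Q_{d₀}(X)` forces `‖x‖² ≤ N` on `X`, so `X` is compact. By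
Stone–Weierstrass, `√f` is a uniform limit on `X` of polynomials `r`; squaring is continuous on
`C(X, ℝ)`, so the squares `r²`, which lie in `Q_{2 deg r}(X)`, converge uniformly to `f`.
-/

section QuadraticModule

variable {n k : ℕ}

lemma zero_mem_SOSdeg (m : ℕ) : (0 : MvPolynomial (Fin n) ℝ) ∈ SOSdeg m :=
  ⟨0, by simp, by simp⟩

lemma sq_mem_SOSdeg {m : ℕ} {q : MvPolynomial (Fin n) ℝ} (hq : q.totalDegree ≤ m) :
    q ^ 2 ∈ SOSdeg m :=
  ⟨{q}, by simpa using hq, by simp⟩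

lemma eval_nonneg_of_mem_SOSdeg {m : ℕ} {p : MvPolynomial (Fin n) ℝ} (hp : p ∈ SOSdeg m)
    (x : Fin n → ℝ) : 0 ≤ eval x p := by
  obtain ⟨s, -, rfl⟩ := hp
  rw [map_multiset_sum, Multiset.map_map]
  exact Multiset.sum_nonneg fun a ha => by
    obtain ⟨q, -, rfl⟩ := Multiset.mem_map.1 ha
    simpa using sq_nonneg (eval x q)

lemma eval_nonneg_of_mem_QModule {g : Fin k → MvPolynomial (Fin n) ℝ} {d : ℕ}
    {p : MvPolynomial (Fin n) ℝ} (hp : p ∈ QModule g d) {x : Fin n → ℝ}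
    (hx : ∀ i, 0 ≤ eval x (g i)) : 0 ≤ eval x p := by
  obtain ⟨s₀, s, hs₀, hs, rfl⟩ := hp
  simp only [map_add, map_sum, map_mul]
  exact add_nonneg (eval_nonneg_of_mem_SOSdeg hs₀ x)
    (Finset.sum_nonneg fun i _ => mul_nonneg (hx i) (eval_nonneg_of_mem_SOSdeg (hs i) x))

lemma sq_mem_QModule (g : Fin k → MvPolynomial (Fin n) ℝ) (r : MvPolynomial (Fin n) ℝ) :
    r ^ 2 ∈ QModule g (2 * r.totalDegree) :=
  ⟨r ^ 2, 0, sq_mem_SOSdeg (by omega), fun _ => zero_mem_SOSdeg _, by simp⟩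

end QuadraticModule

section Compactness

variable {ι : Type*}

lemma isClosed_setOf_forall_eval_nonneg {κ : Type*} (g : κ → MvPolynomial ι ℝ) :
    IsClosed {x : ι → ℝ | ∀ i, 0 ≤ eval x (g i)} := by
  simp only [Set.ofPred_forall]
  exact isClosed_iInter fun i => isClosed_le continuous_const (continuous_eval _)

lemma isBounded_of_sum_sq_le [Fintype ι] {s : Set (ι → ℝ)} (N : ℝ)
    (h : ∀ x ∈ s, ∑ i, x i ^ 2 ≤ N) : Bornology.IsBounded s := by
  refine (Metric.isBounded_iff_subset_closedBall 0).2 ⟨√N, fun x hx => ?_⟩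
  rw [mem_closedBall_zero_iff, pi_norm_le_iff_of_nonneg (Real.sqrt_nonneg N)]
  exact fun i => Real.abs_le_sqrt <|
    (Finset.single_le_sum (fun j _ => sq_nonneg (x j)) (Finset.mem_univ i)).trans (h x hx)

lemma isCompact_setOf_forall_eval_nonneg {n k : ℕ} {g : Fin k → MvPolynomial (Fin n) ℝ}
    {N : ℝ} {d : ℕ} (hArch : C N - ∑ i, X i ^ 2 ∈ QModule g d) :
    IsCompact {x : Fin n → ℝ | ∀ i, 0 ≤ eval x (g i)} := by
  refine Metric.isCompact_of_isClosed_isBounded (isClosed_setOf_forall_eval_nonneg g)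
    (isBounded_of_sum_sq_le N fun x hx => ?_)
  have := eval_nonneg_of_mem_QModule hArch hx
  simp only [map_sub, eval_C, map_sum, map_pow, eval_X] at this
  linarith

end Compactness

section StoneWeierstrass

variable {ι : Type*}

noncomputable def MvPolynomial.toContinuousMapOnAlgHom (s : Set (ι → ℝ)) :
    MvPolynomial ι ℝ →ₐ[ℝ] C(s, ℝ) :=
  aeval fun i => ⟨fun x => (x : ι → ℝ) i, (continuous_apply i).comp continuous_subtype_val⟩

lemma MvPolynomial.toContinuousMapOnAlgHom_apply (s : Set (ι → ℝ)) (p : MvPolynomial ι ℝ)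
    (x : s) : toContinuousMapOnAlgHom s p x = eval (x : ι → ℝ) p := by
  rw [toContinuousMapOnAlgHom, ← ContinuousMap.evalAlgHom_apply ℝ, comp_aeval_apply,
    ← coe_aeval_eq_eval]
  rfl

lemma MvPolynomial.separatesPoints_range_toContinuousMapOnAlgHom (s : Set (ι → ℝ)) :
    (toContinuousMapOnAlgHom s).range.SeparatesPoints := by
  intro x y hxy
  obtain ⟨i, hi⟩ := Function.ne_iff.1 (Subtype.coe_ne_coe.2 hxy)
  exact ⟨_, ⟨_, ⟨X i, rfl⟩, rfl⟩, by simpa [toContinuousMapOnAlgHom_apply] using hi⟩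

lemma exists_mvPolynomial_sq_near {s : Set (ι → ℝ)} (hs : IsCompact s) {f : (ι → ℝ) → ℝ}
    (hf : ContinuousOn f s) (hf0 : ∀ x ∈ s, 0 ≤ f x) {ε : ℝ} (hε : 0 < ε) :
    ∃ r : MvPolynomial ι ℝ, ∀ x ∈ s, |f x - eval x r ^ 2| < ε := by
  have : CompactSpace s := isCompact_iff_compactSpace.1 hs
  let A := (toContinuousMapOnAlgHom s).range
  let sqrtF : C(s, ℝ) := ⟨fun x => √(f x), Real.continuous_sqrt.comp hf.domRestrict⟩
  have hsqrtF : sqrtF ∈ closure (A : Set C(s, ℝ)) := by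
    rw [← Subalgebra.topologicalClosure_coe,
      ContinuousMap.subalgebra_topologicalClosure_eq_top_of_separatesPoints A
        (separatesPoints_range_toContinuousMapOnAlgHom s)]
    trivial
  have hF : sqrtF ^ 2 ∈ closure ((· ^ 2) '' (A : Set C(s, ℝ))) :=
    map_mem_closure (f := (· ^ 2)) (continuous_pow 2) hsqrtF (Set.mapsTo_image _ _)
  obtain ⟨_, ⟨_, ⟨r, rfl⟩, rfl⟩, hdist⟩ := Metric.mem_closure_iff.1 hF ε hε
  refine ⟨r, fun x hx => ?_⟩
  have hpt := (ContinuousMap.dist_apply_le_dist ⟨x, hx⟩).trans_lt hdist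
  rwa [ContinuousMap.pow_apply, ContinuousMap.pow_apply, AlgHom.toRingHom_eq_coe,
    RingHom.coe_coe, toContinuousMapOnAlgHom_apply, ContinuousMap.coe_mk,
    Real.sq_sqrt (hf0 x hx), Real.dist_eq] at hpt

end StoneWeierstrass

theorem qmodule_dense_in_nonneg_continuous_general {n k : ℕ} (g : Fin k → MvPolynomial (Fin n) ℝ)
    (X : Set (Fin n → ℝ)) (hX : X = {x | ∀ i, 0 ≤ MvPolynomial.eval x (g i)})
    (N : ℝ) (d₀ : ℕ)
    (hArch : (MvPolynomial.C N - ∑ i, MvPolynomial.X i ^ 2) ∈ QModule g d₀)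
    (f : (Fin n → ℝ) → ℝ) (hf : ContinuousOn f X) (hf0 : ∀ x ∈ X, 0 ≤ f x)
    (ε : ℝ) (hε : 0 < ε) :
    ∃ d : ℕ, ∃ p ∈ QModule g d, ∀ x ∈ X, |f x - MvPolynomial.eval x p| < ε := by
  subst hX
  obtain ⟨r, hr⟩ := exists_mvPolynomial_sq_near (isCompact_setOf_forall_eval_nonneg hArch)
    hf hf0 hε
  exact ⟨2 * r.totalDegree, r ^ 2, sq_mem_QModule g r, fun x hx => by simpa using hr x hx⟩

/-- Density of truncated quadratic module elements among continuous functions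
nonnegative on `X` (Corollary of Putinar's Positivstellensatz and Stone–Weierstrass). -/
theorem qmodule_dense_in_nonneg_continuous {n k : ℕ} (g : Fin k → MvPolynomial (Fin n) ℝ)
    (X : Set (Fin n → ℝ)) (hX : X = {x | ∀ i, 0 ≤ MvPolynomial.eval x (g i)})
    (N : ℝ) (hN : 0 ≤ N) (d₀ : ℕ) (hd₀ : 0 < d₀)
    (hArch : (MvPolynomial.C N - ∑ i, MvPolynomial.X i ^ 2) ∈ QModule g d₀)
    (f : (Fin n → ℝ) → ℝ) (hf : ContinuousOn f X) (hf0 : ∀ x ∈ X, 0 ≤ f x)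
    (ε : ℝ) (hε : 0 < ε) :
    ∃ d : ℕ, ∃ p ∈ QModule g d, ∀ x ∈ X, |f x - MvPolynomial.eval x p| < ε :=
  qmodule_dense_in_nonneg_continuous_general g X hX N d₀ hArch f hf hf0 ε hε
end

section
/- Let f̄ : ℝⁿ → ℝⁿ be globally Lipschitz with flow φ, let β > 0, and let w : ℝⁿ → ℝ be continuously differentiable with compact support. Then for every x_0 ∈ ℝⁿ the integral v(x_0) := −∫_0^∞ e^{−βt} w(φ(t, x_0)) dt converges, and for every x_0 ∈ ℝⁿ the map t ↦ v(φ(t, x_0)) is differentiable on [0,∞) with derivative equal to β·v(φ(t, x_0)) + w(φ(t, x_0)) at every t ≥ 0. In particular v solves the equation ∇v·f̄ − βv = w along every trajectory of the flow. -/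
open MeasureTheory Set

/-!
By uniqueness of solutions of `y' = f̄ y`, the flow satisfies `φ(r, φ(s, x)) = φ(r + s, x)`
for `r, s ≥ 0`, hence `v(φ(s, x₀)) = -e^{βs} ∫_s^∞ e^{-βu} w(φ(u, x₀)) du`. The integral
converges because `w` is bounded, and since `∫_s^∞ = ∫_0^∞ - ∫_0^s`, the product rule and the
fundamental theorem of calculus give the derivative `β v(φ(s, x₀)) + w(φ(s, x₀))`.
-/

section Flow

variable {E : Type*} [NormedAddCommGroup E] [NormedSpace ℝ E] {f : E → E} {φ : ℝ → E → E}

theorem continuousOn_flow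
    (hφ : ∀ x, ∀ t ∈ Ici (0:ℝ), HasDerivWithinAt (fun s => φ s x) (f (φ t x)) (Ici 0) t)
    (x : E) : ContinuousOn (fun t => φ t x) (Ici 0) :=
  fun t ht => (hφ x t ht).continuousWithinAt

theorem flow_flow_eq_flow_add {K : NNReal} (hf : LipschitzWith K f) (hφ0 : ∀ x, φ 0 x = x)
    (hφ : ∀ x, ∀ t ∈ Ici (0:ℝ), HasDerivWithinAt (fun s => φ s x) (f (φ t x)) (Ici 0) t)
    (x : E) {r s : ℝ} (hr : 0 ≤ r) (hs : 0 ≤ s) : φ r (φ s x) = φ (r + s) x := by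
  have hshift_maps : ∀ u ∈ Ici (0:ℝ), MapsTo (· + s) (Ici u) (Ici 0) :=
    fun u hu a ha => add_nonneg (le_trans hu ha) hs
  have hshift_cont : ContinuousOn (fun u => φ (u + s) x) (Icc 0 r) :=
    ((continuousOn_flow hφ x).comp (continuousOn_id.add continuousOn_const)
      (hshift_maps 0 self_mem_Ici)).mono Icc_subset_Ici_self
  have hshift_deriv : ∀ u ∈ Ico 0 r,
      HasDerivWithinAt (fun u => φ (u + s) x) (f (φ (u + s) x)) (Ici u) u := fun u hu => by
    simpa only [id_eq, Function.comp_def, one_smul] using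
      (hφ x (u + s) (add_nonneg hu.1 hs)).scomp u
        ((hasDerivAt_id u).add_const s).hasDerivWithinAt (hshift_maps u hu.1)
  exact ODE_solution_unique (v := fun _ => f) (fun _ => hf)
    ((continuousOn_flow hφ _).mono Icc_subset_Ici_self)
    (fun u hu => (hφ _ u hu.1).mono (Ici_subset_Ici.2 hu.1)) hshift_cont hshift_deriv
    (by simp [hφ0]) ⟨hr, le_rfl⟩

end Flow

theorem integrableOn_Ici_exp_neg_mul_mul_of_norm_le {β C : ℝ} {g : ℝ → ℝ} (hβ : 0 < β)
    (hg : AEStronglyMeasurable g (volume.restrict (Ici 0)))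
    (hC : ∀ t ∈ Ici (0:ℝ), ‖g t‖ ≤ C) :
    IntegrableOn (fun t => Real.exp (-β * t) * g t) (Ici 0) := by
  have hexp : IntegrableOn (fun t => C * Real.exp (-β * t)) (Ici 0) :=
    (integrableOn_Ici_iff_integrableOn_Ioi).2 ((exp_neg_integrableOn_Ioi 0 hβ).const_mul C)
  refine hexp.mono'
    ((Real.continuous_exp.comp (continuous_const_mul (-β))).aestronglyMeasurable.mul hg)
    (ae_restrict_of_forall_mem measurableSet_Ici fun t ht => ?_)
  rw [norm_mul, Real.norm_of_nonneg (Real.exp_pos _).le, mul_comm C]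
  exact mul_le_mul_of_nonneg_left (hC t ht) (Real.exp_pos _).le

theorem hasDerivWithinAt_intervalIntegral_Ici {E : Type*} [NormedAddCommGroup E]
    [NormedSpace ℝ E] [CompleteSpace E] {h : ℝ → E} {a t : ℝ} (hc : ContinuousOn h (Ici a))
    (ht : a ≤ t) : HasDerivWithinAt (fun s => ∫ u in a..s, h u) (h t) (Ici a) t := by
  have hint : IntervalIntegrable h volume a t :=
    (hc.mono (by rw [uIcc_of_le ht]; exact Icc_subset_Ici_self)).intervalIntegrable
  have hmeas := hc.stronglyMeasurableAtFilter_nhdsWithin (μ := volume) measurableSet_Ici t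
  rcases ht.eq_or_lt with rfl | hat
  · exact intervalIntegral.integral_hasDerivWithinAt_right hint
      (hmeas.filter_mono (nhdsWithin_mono _ Ioi_subset_Ici_self))
      ((hc a self_mem_Ici).mono Ioi_subset_Ici_self)
  · rw [nhdsWithin_eq_nhds.2 (Ici_mem_nhds hat)] at hmeas
    exact (intervalIntegral.integral_hasDerivAt_right hint hmeas
      (hc.continuousAt (Ici_mem_nhds hat))).hasDerivWithinAt

section DiscountedTail

variable {β : ℝ} {g : ℝ → ℝ}

theorem integral_Ici_exp_neg_mul_mul_comp_add_const (s : ℝ) :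
    ∫ r in Ici (0:ℝ), Real.exp (-β * r) * g (r + s)
      = Real.exp (β * s) * ∫ u in Ici s, Real.exp (-β * u) * g u := by
  have hshift := (measurePreserving_add_right volume s).setIntegral_preimage_emb
    (measurableEmbedding_addRight s) (fun u => Real.exp (-β * u) * g u) (Ici s)
  rw [preimage_add_const_Ici, sub_self] at hshift
  rw [← hshift, ← integral_const_mul]
  congr 1 with r
  rw [← mul_assoc, ← Real.exp_add]
  ring_nf

theorem hasDerivWithinAt_integral_Ici_exp_neg_mul_mul_comp_add_const
    (hg : ContinuousOn g (Ici 0))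
    (hint : IntegrableOn (fun u => Real.exp (-β * u) * g u) (Ici 0))
    {t : ℝ} (ht : 0 ≤ t) :
    HasDerivWithinAt (fun s => ∫ r in Ici (0:ℝ), Real.exp (-β * r) * g (r + s))
      (β * (∫ r in Ici (0:ℝ), Real.exp (-β * r) * g (r + t)) - g t) (Ici 0) t := by
  set G : ℝ → ℝ := fun u => Real.exp (-β * u) * g u with hG
  have htail : ∀ s ∈ Ici (0:ℝ), ∫ r in Ici (0:ℝ), Real.exp (-β * r) * g (r + s)
      = Real.exp (β * s) * ((∫ u in Ici 0, G u) - ∫ u in 0..s, G u) := fun s hs => by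
    rw [integral_Ici_exp_neg_mul_mul_comp_add_const,
      ← intervalIntegral.integral_Ici_sub_Ici' hint (hint.mono_set (Ici_subset_Ici.2 hs)),
      sub_sub_cancel]
  have hexp : HasDerivAt (fun s => Real.exp (β * s)) (Real.exp (β * t) * β) t := by
    simpa using ((hasDerivAt_id t).const_mul β).exp
  have hFTC : HasDerivWithinAt (fun s => ∫ u in 0..s, G u) (G t) (Ici 0) t :=
    hasDerivWithinAt_intervalIntegral_Ici
      ((Real.continuous_exp.comp (continuous_const_mul (-β))).continuousOn.mul hg) ht
  refine ((hexp.hasDerivWithinAt.mul (hFTC.const_sub _)).congr htail (htail t ht)).congr_deriv ?_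
  rw [htail t ht, hG]
  have : Real.exp (β * t) * Real.exp (-β * t) = 1 := by rw [← Real.exp_add]; simp
  linear_combination (-g t) * this

end DiscountedTail

/-- For a globally Lipschitz vector field `f` with flow `φ`, discount factor `β > 0` and
a compactly supported `C¹` function `w`, the integral `v(x₀) = -∫₀^∞ e^{-βt} w(φ(t,x₀)) dt`
converges, and `t ↦ v(φ(t,x₀))` is differentiable on `[0,∞)` with derivative
`β v(φ(t,x₀)) + w(φ(t,x₀))`; in particular `v` solves `∇v·f - βv = w` along trajectories. -/
theorem discounted_transport_solution {n : ℕ}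
    (f : (Fin n → ℝ) → (Fin n → ℝ)) (K : NNReal) (hf : LipschitzWith K f)
    (φ : ℝ → (Fin n → ℝ) → (Fin n → ℝ))
    (hφ0 : ∀ x, φ 0 x = x)
    (hφ : ∀ x, ∀ t ∈ Ici (0:ℝ), HasDerivWithinAt (fun s => φ s x) (f (φ t x)) (Ici 0) t)
    (β : ℝ) (hβ : 0 < β)
    (w : (Fin n → ℝ) → ℝ) (hw : ContDiff ℝ 1 w) (hwc : HasCompactSupport w)
    (x₀ : Fin n → ℝ) :
    IntegrableOn (fun t => Real.exp (-β * t) * w (φ t x₀)) (Ici 0) ∧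
      ∀ t ∈ Ici (0:ℝ),
        HasDerivWithinAt
          (fun s => -(∫ r in Ici (0:ℝ), Real.exp (-β * r) * w (φ r (φ s x₀))))
          (β * (-(∫ r in Ici (0:ℝ), Real.exp (-β * r) * w (φ r (φ t x₀)))) + w (φ t x₀))
          (Ici 0) t := by
  have hg : ContinuousOn (fun t => w (φ t x₀)) (Ici 0) :=
    hw.continuous.comp_continuousOn (continuousOn_flow hφ x₀)
  obtain ⟨C, hC⟩ := hwc.exists_bound_of_continuous hw.continuous
  have hint := integrableOn_Ici_exp_neg_mul_mul_of_norm_le hβ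
    (hg.aestronglyMeasurable measurableSet_Ici) fun t _ => hC (φ t x₀)
  have hv : ∀ s ∈ Ici (0:ℝ), ∫ r in Ici (0:ℝ), Real.exp (-β * r) * w (φ r (φ s x₀))
      = ∫ r in Ici (0:ℝ), Real.exp (-β * r) * w (φ (r + s) x₀) := fun s hs =>
    setIntegral_congr_fun measurableSet_Ici fun r hr => by
      rw [flow_flow_eq_flow_add hf hφ0 hφ x₀ hr hs]
  refine ⟨hint, fun t ht => ?_⟩
  have hderiv := (hasDerivWithinAt_integral_Ici_exp_neg_mul_mul_comp_add_const hg hint ht).neg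
  rw [← hv t ht] at hderiv
  exact (hderiv.congr (fun s hs => congr_arg Neg.neg (hv s hs))
    (congr_arg Neg.neg (hv t ht))).congr_deriv (by ring)
end

section
/- Let X ⊆ ℝⁿ be compact, let f, f_{u_1}, …, f_{u_m} : ℝⁿ → ℝⁿ and l_x, l_{u_1}, …, l_{u_m} : ℝⁿ → ℝ be continuous, let ρ, σ_1, …, σ_m : ℝⁿ → ℝ be continuously differentiable with ρ > 0 on X, and set u_i(x) := σ_i(x)/ρ(x), f̂ := ρ f + Σ_{i=1}^m f_{u_i} σ_i and l̂ := ρ l_x + Σ_{i=1}^m l_{u_i} σ_i. Let β > 0 and M ∈ ℝ, and suppose V̄ : ℝⁿ → ℝ is continuously differentiable with β ρ(x) V̄(x) − ∇V̄(x)·f̂(x) − l̂(x) ≥ 0 for all x ∈ X and V̄(x) ≥ M for all x ∈ ∂X. Let x : [0, τ] → ℝⁿ (with τ ∈ [0,∞) or the whole of [0,∞)) be differentiable with x′(t) = f(x(t)) + Σ_{i=1}^m f_{u_i}(x(t)) u_i(x(t)). Then: (i) if x(t) ∈ X for all t ≥ 0, then V̄(x(0)) ≥ ∫_0^∞ e^{−βt}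 [ l_x(x(t)) + Σ_{i=1}^m l_{u_i}(x(t)) u_i(x(t)) ] dt; (ii) if x(t) ∈ X for all t ∈ [0, τ] and x(τ) ∈ ∂X, then V̄(x(0)) ≥ e^{−βτ} M + ∫_0^τ e^{−βt} [ l_x(x(t)) + Σ_{i=1}^m l_{u_i}(x(t)) u_i(x(t)) ] dt. -/
open MeasureTheory Set

/-! Along a trajectory in `X`, the Hamilton–Jacobi inequality divided by `ρ > 0` says that
`t ↦ e^{-βt} V̄(x t)` decreases at least at rate `e^{-βt} l(x t, u(x t))`, so comparing
derivatives gives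
`e^{-βτ} V̄(x τ) + ∫₀^τ e^{-βt} l ≤ V̄(x 0)`. At an exit time `V̄(x τ) ≥ M`; on an infinite
horizon the compactness of `X` bounds `V̄` and `l` along the trajectory, so the cost is
integrable and the boundary term vanishes as `τ → ∞`. -/

open Real in
theorem discounted_add_integral_le_of_le_sub_deriv {h h' c : ℝ → ℝ} {β τ : ℝ} (hτ : 0 ≤ τ)
    (hcont : ContinuousOn h (Icc 0 τ))
    (hderiv : ∀ t ∈ Ioo 0 τ, HasDerivWithinAt h (h' t) (Ioi t) t)
    (hc : IntegrableOn c (Icc 0 τ)) (hle : ∀ t ∈ Ioo 0 τ, c t ≤ β * h t - h' t) :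
    exp (-β * τ) * h τ + ∫ t in 0..τ, exp (-β * t) * c t ≤ h 0 := by
  have hexp : Continuous fun t : ℝ => exp (-β * t) := by fun_prop
  have key := intervalIntegral.integral_le_sub_of_hasDeriv_right_of_le hτ
    (g := fun t => -(exp (-β * t) * h t)) (g' := fun t => exp (-β * t) * (β * h t - h' t))
    (hexp.continuousOn.mul hcont).neg
    (fun t ht => by
      have he : HasDerivAt (fun s => exp (-β * s)) (exp (-β * t) * -β) t := by
        simpa using ((hasDerivAt_id t).const_mul (-β)).exp
      exact (he.hasDerivWithinAt.fun_mul (hderiv t ht)).fun_neg.congr_deriv (by ring))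
    (hc.continuousOn_mul hexp.continuousOn isCompact_Icc)
    (fun t ht => mul_le_mul_of_nonneg_left (hle t ht) (exp_pos _).le)
  simp only [mul_zero, exp_zero, one_mul] at key
  linarith

section Supersolution

open Filter Topology Real

variable {E : Type*} [NormedAddCommGroup E] [NormedSpace ℝ E]
  {X : Set E} {F : E → E} {ℓ V : E → ℝ} {β : ℝ} {x : ℝ → E}

theorem discounted_add_integral_le_of_supersolution (hV : Differentiable ℝ V)
    (hℓ : ContinuousOn ℓ X) (hsuper : ∀ p ∈ X, ℓ p ≤ β * V p - fderiv ℝ V p (F p))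
    {τ : ℝ} (hτ : 0 ≤ τ)
    (hx : ∀ t ∈ Icc 0 τ, HasDerivWithinAt x (F (x t)) (Icc 0 τ) t)
    (hxX : ∀ t ∈ Icc 0 τ, x t ∈ X) :
    exp (-β * τ) * V (x τ) + ∫ t in 0..τ, exp (-β * t) * ℓ (x t) ≤ V (x 0) := by
  have hxc : ContinuousOn x (Icc 0 τ) := fun t ht => (hx t ht).continuousWithinAt
  refine discounted_add_integral_le_of_le_sub_deriv hτ (hV.continuous.comp_continuousOn hxc)
    (fun t ht => ?_) ((hℓ.comp hxc hxX).integrableOn_compact isCompact_Icc)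
    (fun t ht => hsuper _ (hxX t (Ioo_subset_Icc_self ht)))
  exact ((hV _).hasFDerivAt.comp_hasDerivAt t
    ((hx t (Ioo_subset_Icc_self ht)).hasDerivAt (Icc_mem_nhds ht.1 ht.2))).hasDerivWithinAt

theorem integral_discounted_le_of_supersolution (hX : IsCompact X) (hβ : 0 < β)
    (hV : Differentiable ℝ V) (hℓ : ContinuousOn ℓ X)
    (hsuper : ∀ p ∈ X, ℓ p ≤ β * V p - fderiv ℝ V p (F p))
    (hx : ∀ t ∈ Ici 0, HasDerivWithinAt x (F (x t)) (Ici 0) t)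
    (hxX : ∀ t ∈ Ici 0, x t ∈ X) :
    ∫ t in Ici 0, exp (-β * t) * ℓ (x t) ≤ V (x 0) := by
  have hxc : ContinuousOn x (Ici 0) := fun t ht => (hx t ht).continuousWithinAt
  obtain ⟨Cℓ, hCℓ⟩ := hX.exists_bound_of_continuousOn hℓ
  obtain ⟨CV, hCV⟩ := hX.exists_bound_of_continuousOn hV.continuous.continuousOn
  have hint : IntegrableOn (fun t => exp (-β * t) * ℓ (x t)) (Ioi 0) := by
    refine ((exp_neg_integrableOn_Ioi 0 hβ).mul_const Cℓ).mono'
      (((by fun_prop : Continuous fun t => exp (-β * t)).continuousOn.mul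
        (hℓ.comp hxc hxX)).mono Ioi_subset_Ici_self |>.aestronglyMeasurable measurableSet_Ioi) ?_
    refine (ae_restrict_iff' measurableSet_Ioi).2 (Eventually.of_forall fun t ht => ?_)
    rw [norm_mul, norm_of_nonneg (exp_pos _).le]
    exact mul_le_mul_of_nonneg_left (hCℓ _ (hxX t (mem_Ici_of_Ioi ht))) (exp_pos _).le
  have hfinite : ∀ τ ≥ (0 : ℝ),
      ∫ t in 0..τ, exp (-β * t) * ℓ (x t) ≤ V (x 0) - exp (-β * τ) * V (x τ) := fun τ hτ => by
    have := discounted_add_integral_le_of_supersolution hV hℓ hsuper hτ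
      (fun t ht => (hx t ht.1).mono Icc_subset_Ici_self) (fun t ht => hxX t ht.1)
    linarith
  have htail : Tendsto (fun τ => exp (-β * τ) * V (x τ)) atTop (𝓝 0) := by
    refine Tendsto.zero_mul_isBoundedUnder_le ?_ ⟨CV, eventually_map.2 ?_⟩
    · exact tendsto_exp_atBot.comp (tendsto_id.const_mul_atTop_of_neg (neg_neg_of_pos hβ))
    · filter_upwards [eventually_ge_atTop 0] with τ hτ using hCV _ (hxX τ hτ)
  rw [integral_Ici_eq_integral_Ioi]
  refine le_of_tendsto_of_tendsto (intervalIntegral_tendsto_integral_Ioi 0 hint tendsto_id)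
    (by simpa only [sub_zero] using tendsto_const_nhds.sub htail) ?_
  filter_upwards [eventually_ge_atTop 0] with τ hτ using hfinite τ hτ

end Supersolution

section ClosedLoop

variable {E ι : Type*} [Fintype ι]

noncomputable def closedLoopCost (lx : E → ℝ) (lu : ι → E → ℝ) (ρ : E → ℝ) (σ : ι → E → ℝ)
    (p : E) : ℝ :=
  lx p + ∑ i, lu i p * (σ i p / ρ p)

noncomputable def closedLoopField [AddCommGroup E] [Module ℝ E] (f : E → E) (fu : ι → E → E)
    (ρ : E → ℝ) (σ : ι → E → ℝ) (p : E) : E :=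
  f p + ∑ i, (σ i p / ρ p) • fu i p

variable {lx : E → ℝ} {lu : ι → E → ℝ} {ρ : E → ℝ} {σ : ι → E → ℝ}

theorem mul_closedLoopCost {p : E} (hp : ρ p ≠ 0) :
    ρ p * closedLoopCost lx lu ρ σ p = ρ p * lx p + ∑ i, lu i p * σ i p := by
  simp only [closedLoopCost, mul_add, Finset.mul_sum, mul_left_comm (ρ p), mul_div_cancel₀ _ hp]

theorem smul_closedLoopField [AddCommGroup E] [Module ℝ E] {f : E → E} {fu : ι → E → E} {p : E}
    (hp : ρ p ≠ 0) : ρ p • closedLoopField f fu ρ σ p = ρ p • f p + ∑ i, σ i p • fu i p := by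
  simp only [closedLoopField, smul_add, Finset.smul_sum, smul_smul, mul_div_cancel₀ _ hp]

theorem continuousOn_closedLoopCost [TopologicalSpace E] {X : Set E} (hlx : Continuous lx)
    (hlu : ∀ i, Continuous (lu i)) (hρ : Continuous ρ) (hσ : ∀ i, Continuous (σ i))
    (hρX : ∀ p ∈ X, ρ p ≠ 0) : ContinuousOn (closedLoopCost lx lu ρ σ) X :=
  hlx.continuousOn.add <| continuousOn_finsetSum _ fun i _ =>
    (hlu i).continuousOn.mul ((hσ i).continuousOn.div hρ.continuousOn hρX)

theorem closedLoopCost_le_of_rational [NormedAddCommGroup E] [NormedSpace ℝ E] {f : E → E}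
    {fu : ι → E → E} {V : E → ℝ} {β : ℝ} {p : E} (hp : 0 < ρ p)
    (h : 0 ≤ β * ρ p * V p - fderiv ℝ V p (ρ p • f p + ∑ i, σ i p • fu i p) -
      (ρ p * lx p + ∑ i, lu i p * σ i p)) :
    closedLoopCost lx lu ρ σ p ≤ β * V p - fderiv ℝ V p (closedLoopField f fu ρ σ p) := by
  rw [← smul_closedLoopField hp.ne', ← mul_closedLoopCost hp.ne', map_smul, smul_eq_mul] at h
  have hscaled : 0 ≤ ρ p * (β * V p - fderiv ℝ V p (closedLoopField f fu ρ σ p) -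
      closedLoopCost lx lu ρ σ p) := by linarith
  linarith [(mul_nonneg_iff_of_pos_left hp).1 hscaled]

end ClosedLoop

theorem value_function_upper_bound_verification_general {n m : ℕ}
    (X : Set (Fin n → ℝ)) (hXc : IsCompact X)
    (f : (Fin n → ℝ) → (Fin n → ℝ)) (fu : Fin m → (Fin n → ℝ) → (Fin n → ℝ))
    (lx : (Fin n → ℝ) → ℝ) (lu : Fin m → (Fin n → ℝ) → ℝ)
    (hlx : Continuous lx) (hlu : ∀ i, Continuous (lu i))
    (ρ : (Fin n → ℝ) → ℝ) (σ : Fin m → (Fin n → ℝ) → ℝ)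
    (hρ : ContDiff ℝ 1 ρ) (hσ : ∀ i, ContDiff ℝ 1 (σ i))
    (hρpos : ∀ x ∈ X, 0 < ρ x)
    (β M : ℝ) (hβ : 0 < β)
    (V : (Fin n → ℝ) → ℝ) (hV : ContDiff ℝ 1 V)
    (hineq : ∀ x ∈ X, 0 ≤ β * ρ x * V x -
      fderiv ℝ V x (ρ x • f x + ∑ i, σ i x • fu i x) -
      (ρ x * lx x + ∑ i, lu i x * σ i x))
    (hbd : ∀ x ∈ frontier X, M ≤ V x)
    (x : ℝ → (Fin n → ℝ)) :
    ((∀ t ∈ Ici (0:ℝ), HasDerivWithinAt x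
        (f (x t) + ∑ i, (σ i (x t) / ρ (x t)) • fu i (x t)) (Ici 0) t) →
      (∀ t ∈ Ici (0:ℝ), x t ∈ X) →
      (∫ t in Ici (0:ℝ), Real.exp (-β * t) *
        (lx (x t) + ∑ i, lu i (x t) * (σ i (x t) / ρ (x t)))) ≤ V (x 0)) ∧
    (∀ τ : ℝ, 0 ≤ τ →
      (∀ t ∈ Icc (0:ℝ) τ, HasDerivWithinAt x
        (f (x t) + ∑ i, (σ i (x t) / ρ (x t)) • fu i (x t)) (Icc 0 τ) t) →
      (∀ t ∈ Icc (0:ℝ) τ, x t ∈ X) → x τ ∈ frontier X →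
      Real.exp (-β * τ) * M + (∫ t in (0:ℝ)..τ, Real.exp (-β * t) *
        (lx (x t) + ∑ i, lu i (x t) * (σ i (x t) / ρ (x t)))) ≤ V (x 0)) := by
  have hVd := hV.differentiable one_ne_zero
  have hcost := continuousOn_closedLoopCost hlx hlu hρ.continuous (fun i => (hσ i).continuous)
    fun p hp => (hρpos p hp).ne'
  have hsuper : ∀ p ∈ X, closedLoopCost lx lu ρ σ p ≤
      β * V p - fderiv ℝ V p (closedLoopField f fu ρ σ p) :=
    fun p hp => closedLoopCost_le_of_rational (hρpos p hp) (hineq p hp)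
  refine ⟨fun hx hxX => integral_discounted_le_of_supersolution hXc hβ hVd hcost hsuper hx hxX,
    fun τ hτ hx hxX hxτ => ?_⟩
  have hcost_le := discounted_add_integral_le_of_supersolution hVd hcost hsuper hτ hx hxX
  have hexit := mul_le_mul_of_nonneg_left (hbd _ hxτ) (Real.exp_pos (-β * τ)).le
  exact (add_le_add_left hexit _).trans hcost_le

/-- Verification theorem for upper bounds: if `β ρ V̄ − ∇V̄·f̂ − l̂ ≥ 0` on `X` and `V̄ ≥ M`
on `∂X`, then `V̄(x(0))` bounds from above the discounted cost of any closed-loop trajectory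
of the rational controller `u = σ/ρ`, both for trajectories staying in `X` forever and for
trajectories stopped when hitting `∂X`. -/
theorem value_function_upper_bound_verification {n m : ℕ}
    (X : Set (Fin n → ℝ)) (hXc : IsCompact X)
    (f : (Fin n → ℝ) → (Fin n → ℝ)) (fu : Fin m → (Fin n → ℝ) → (Fin n → ℝ))
    (lx : (Fin n → ℝ) → ℝ) (lu : Fin m → (Fin n → ℝ) → ℝ)
    (hf : Continuous f) (hfu : ∀ i, Continuous (fu i))
    (hlx : Continuous lx) (hlu : ∀ i, Continuous (lu i))
    (ρ : (Fin n → ℝ) → ℝ) (σ : Fin m → (Fin n → ℝ) → ℝ)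
    (hρ : ContDiff ℝ 1 ρ) (hσ : ∀ i, ContDiff ℝ 1 (σ i))
    (hρpos : ∀ x ∈ X, 0 < ρ x)
    (β M : ℝ) (hβ : 0 < β)
    (V : (Fin n → ℝ) → ℝ) (hV : ContDiff ℝ 1 V)
    (hineq : ∀ x ∈ X, 0 ≤ β * ρ x * V x -
      fderiv ℝ V x (ρ x • f x + ∑ i, σ i x • fu i x) -
      (ρ x * lx x + ∑ i, lu i x * σ i x))
    (hbd : ∀ x ∈ frontier X, M ≤ V x)
    (x : ℝ → (Fin n → ℝ)) :
    ((∀ t ∈ Ici (0:ℝ), HasDerivWithinAt x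
        (f (x t) + ∑ i, (σ i (x t) / ρ (x t)) • fu i (x t)) (Ici 0) t) →
      (∀ t ∈ Ici (0:ℝ), x t ∈ X) →
      (∫ t in Ici (0:ℝ), Real.exp (-β * t) *
        (lx (x t) + ∑ i, lu i (x t) * (σ i (x t) / ρ (x t)))) ≤ V (x 0)) ∧
    (∀ τ : ℝ, 0 ≤ τ →
      (∀ t ∈ Icc (0:ℝ) τ, HasDerivWithinAt x
        (f (x t) + ∑ i, (σ i (x t) / ρ (x t)) • fu i (x t)) (Icc 0 τ) t) →
      (∀ t ∈ Icc (0:ℝ) τ, x t ∈ X) → x τ ∈ frontier X →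
      Real.exp (-β * τ) * M + (∫ t in (0:ℝ)..τ, Real.exp (-β * t) *
        (lx (x t) + ∑ i, lu i (x t) * (σ i (x t) / ρ (x t)))) ≤ V (x 0)) :=
  value_function_upper_bound_verification_general X hXc f fu lx lu hlx hlu ρ σ hρ hσ hρpos β M hβ V
    hV hineq hbd x
end

section
/- Let X ⊆ ℝⁿ be compact, let f, f_{u_1}, …, f_{u_m} : ℝⁿ → ℝⁿ and l_x, l_{u_1}, …, l_{u_m} : ℝⁿ → ℝ be continuous, let ρ, σ_1, …, σ_m : ℝⁿ → ℝ be continuously differentiable with ρ > 0 on X, and set u_i(x) := σ_i(x)/ρ(x), f̂ := ρ f + Σ_{i=1}^m f_{u_i} σ_i and l̂ := ρ l_x + Σ_{i=1}^m l_{u_i} σ_i. Let β > 0 and M ∈ ℝ, and suppose V : ℝⁿ → ℝ is continuously differentiable with β ρ(x) V(x) − ∇V(x)·f̂(x) − l̂(x) ≤ 0 for all x ∈ X and V(x) ≤ M for all x ∈ ∂X. Let x : [0, τ] → ℝⁿ (with τ ∈ [0,∞) or the whole of [0,∞)) be differentiable with x′(t) = f(x(t)) + Σ_{i=1}^m f_{u_i}(x(t))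 u_i(x(t)). Then: (i) if x(t) ∈ X for all t ≥ 0, then V(x(0)) ≤ ∫_0^∞ e^{−βt} [ l_x(x(t)) + Σ_{i=1}^m l_{u_i}(x(t)) u_i(x(t)) ] dt; (ii) if x(t) ∈ X for all t ∈ [0, τ] and x(τ) ∈ ∂X, then V(x(0)) ≤ e^{−βτ} M + ∫_0^τ e^{−βt} [ l_x(x(t)) + Σ_{i=1}^m l_{u_i}(x(t)) u_i(x(t)) ] dt. -/
open MeasureTheory Set Filter Topology

/-! Along a closed-loop trajectory, multiplying the closed-loop dissipation inequality
`β V − ∇V·ẋ − l ≤ 0` (the hypothesis divided by `ρ > 0`) by `e^{−βt}` shows that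
`t ↦ e^{−βt} V(x t)` decreases at rate at most `e^{−βt} l(x t)`. Integrating over `[0, τ]` gives
`V(x 0) ≤ e^{−βτ} V(x τ) + ∫₀^τ e^{−βt} l`. On hitting `∂X` we use `V ≤ M`; for a trajectory
staying in the compact `X` forever, `V` and `l` are bounded along it, so as `τ → ∞` the first term
vanishes and the integral converges. -/

theorem closedLoop_dissipation_of_cleared_denominators {E ι : Type*} [AddCommGroup E]
    [Module ℝ E] [Fintype ι] (φ : E →ₗ[ℝ] ℝ) {β r a c : ℝ} {w : E} {w' : ι → E} {s d : ι → ℝ}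
    (hr : 0 < r)
    (h : β * r * a - φ (r • w + ∑ i, s i • w' i) - (r * c + ∑ i, d i * s i) ≤ 0) :
    β * a - φ (w + ∑ i, (s i / r) • w' i) - (c + ∑ i, d i * (s i / r)) ≤ 0 := by
  have hw : r • (w + ∑ i, (s i / r) • w' i) = r • w + ∑ i, s i • w' i := by
    simp only [smul_add, Finset.smul_sum, smul_smul, mul_div_cancel₀ _ hr.ne']
  have hc : r * (c + ∑ i, d i * (s i / r)) = r * c + ∑ i, d i * s i := by
    rw [mul_add, Finset.mul_sum]
    congr 1
    exact Finset.sum_congr rfl fun i _ => by field_simp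
  refine nonpos_of_mul_nonpos_left ?_ hr
  rw [← hw, ← hc, map_smul, smul_eq_mul] at h
  linarith

theorem le_exp_mul_add_integral_of_dissipation {E : Type*} [NormedAddCommGroup E]
    [NormedSpace ℝ E] {V : E → ℝ} {x v : ℝ → E} {L : ℝ → ℝ} {β τ : ℝ} (hτ : 0 ≤ τ)
    (hV : Differentiable ℝ V) (hx : ∀ t ∈ Icc 0 τ, HasDerivWithinAt x (v t) (Icc 0 τ) t)
    (hL : IntegrableOn L (Icc 0 τ))
    (hdiss : ∀ t ∈ Ioo 0 τ, β * V (x t) - fderiv ℝ V (x t) (v t) - L t ≤ 0) :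
    V (x 0) ≤ Real.exp (-β * τ) * V (x τ) + ∫ t in (0:ℝ)..τ, Real.exp (-β * t) * L t := by
  have hexp : ∀ t, HasDerivAt (fun s => Real.exp (-β * s)) (-β * Real.exp (-β * t)) t := by
    intro t
    simpa [mul_comm] using ((hasDerivAt_id t).const_mul (-β)).exp
  have hexpc : Continuous fun t => Real.exp (-β * t) := by fun_prop
  have hxc : ContinuousOn x (Icc 0 τ) := fun t ht => (hx t ht).continuousWithinAt
  have hFTC : ∫ t in (0:ℝ)..τ, -(Real.exp (-β * t) * L t) ≤
      Real.exp (-β * τ) * V (x τ) - Real.exp (-β * 0) * V (x 0) :=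
    intervalIntegral.integral_le_sub_of_hasDeriv_right_of_le
      (g := fun t => Real.exp (-β * t) * V (x t)) hτ
      (hexpc.continuousOn.mul (hV.continuous.comp_continuousOn hxc))
      (fun t ht => ((hexp t).mul ((hV (x t)).hasFDerivAt.comp_hasDerivAt t
        ((hx t (Ioo_subset_Icc_self ht)).hasDerivAt (Icc_mem_nhds ht.1 ht.2)))).hasDerivWithinAt)
      (hL.continuousOn_mul hexpc.continuousOn isCompact_Icc).neg
      (fun t ht => by
        have := mul_le_mul_of_nonneg_left (hdiss t ht) (Real.exp_pos (-β * t)).le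
        simp only [Function.comp_apply]; linarith)
  rw [intervalIntegral.integral_neg, mul_zero, Real.exp_zero, one_mul] at hFTC
  linarith

theorem le_integral_Ioi_of_forall_le_exp_mul_add_intervalIntegral {F : ℝ → ℝ} {a B β : ℝ}
    (hβ : 0 < β) (hF : IntegrableOn F (Ioi 0))
    (h : ∀ τ, 0 ≤ τ → a ≤ Real.exp (-β * τ) * B + ∫ t in (0:ℝ)..τ, F t) :
    a ≤ ∫ t in Ioi 0, F t := by
  have hexp : Tendsto (fun τ => Real.exp (-β * τ) * B) atTop (𝓝 0) := by
    simpa using (Real.tendsto_exp_atBot.comp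
      (tendsto_id.const_mul_atTop_of_neg (neg_neg_iff_pos.mpr hβ))).mul_const B
  have hlim : Tendsto (fun τ => Real.exp (-β * τ) * B + ∫ t in (0:ℝ)..τ, F t)
      atTop (𝓝 (∫ t in Ioi 0, F t)) := by
    simpa using hexp.add (intervalIntegral_tendsto_integral_Ioi 0 hF tendsto_id)
  exact ge_of_tendsto hlim (eventually_atTop.mpr ⟨0, h⟩)

theorem integrableOn_exp_neg_mul_mul_of_norm_le {g : ℝ → ℝ} {β C : ℝ} (hβ : 0 < β)
    (hg : ContinuousOn g (Ici 0)) (hC : ∀ t ∈ Ici 0, ‖g t‖ ≤ C) :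
    IntegrableOn (fun t => Real.exp (-β * t) * g t) (Ioi 0) := by
  refine (exp_neg_integrableOn_Ioi 0 hβ).mul_bdd (c := C)
    ((hg.aestronglyMeasurable measurableSet_Ici).mono_set Ioi_subset_Ici_self) ?_
  filter_upwards [ae_restrict_mem measurableSet_Ioi] with t ht using hC t (Ioi_subset_Ici_self ht)

theorem value_function_lower_bound_verification_general {n m : ℕ}
    (X : Set (Fin n → ℝ)) (hXc : IsCompact X)
    (f : (Fin n → ℝ) → (Fin n → ℝ)) (fu : Fin m → (Fin n → ℝ) → (Fin n → ℝ))
    (lx : (Fin n → ℝ) → ℝ) (lu : Fin m → (Fin n → ℝ) → ℝ)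
    (hlx : Continuous lx) (hlu : ∀ i, Continuous (lu i))
    (ρ : (Fin n → ℝ) → ℝ) (σ : Fin m → (Fin n → ℝ) → ℝ)
    (hρ : ContDiff ℝ 1 ρ) (hσ : ∀ i, ContDiff ℝ 1 (σ i))
    (hρpos : ∀ x ∈ X, 0 < ρ x)
    (β M : ℝ) (hβ : 0 < β)
    (V : (Fin n → ℝ) → ℝ) (hV : ContDiff ℝ 1 V)
    (hineq : ∀ x ∈ X, β * ρ x * V x -
      fderiv ℝ V x (ρ x • f x + ∑ i, σ i x • fu i x) -
      (ρ x * lx x + ∑ i, lu i x * σ i x) ≤ 0)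
    (hbd : ∀ x ∈ frontier X, V x ≤ M)
    (x : ℝ → (Fin n → ℝ)) :
    ((∀ t ∈ Ici (0:ℝ), HasDerivWithinAt x
        (f (x t) + ∑ i, (σ i (x t) / ρ (x t)) • fu i (x t)) (Ici 0) t) →
      (∀ t ∈ Ici (0:ℝ), x t ∈ X) →
      V (x 0) ≤ ∫ t in Ici (0:ℝ), Real.exp (-β * t) *
        (lx (x t) + ∑ i, lu i (x t) * (σ i (x t) / ρ (x t)))) ∧
    (∀ τ : ℝ, 0 ≤ τ →
      (∀ t ∈ Icc (0:ℝ) τ, HasDerivWithinAt x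
        (f (x t) + ∑ i, (σ i (x t) / ρ (x t)) • fu i (x t)) (Icc 0 τ) t) →
      (∀ t ∈ Icc (0:ℝ) τ, x t ∈ X) → x τ ∈ frontier X →
      V (x 0) ≤ Real.exp (-β * τ) * M + ∫ t in (0:ℝ)..τ, Real.exp (-β * t) *
        (lx (x t) + ∑ i, lu i (x t) * (σ i (x t) / ρ (x t)))) := by
  set cost : (Fin n → ℝ) → ℝ := fun y => lx y + ∑ i, lu i y * (σ i y / ρ y)
  have hcost : ContinuousOn cost X := by
    have := hρ.continuous; have := fun i => (hσ i).continuous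
    fun_prop (disch := exact fun y hy => (hρpos y hy).ne')
  have hfinite : ∀ τ, 0 ≤ τ → (∀ t ∈ Icc (0:ℝ) τ, HasDerivWithinAt x
      (f (x t) + ∑ i, (σ i (x t) / ρ (x t)) • fu i (x t)) (Icc 0 τ) t) →
      (∀ t ∈ Icc (0:ℝ) τ, x t ∈ X) →
      V (x 0) ≤ Real.exp (-β * τ) * V (x τ) + ∫ t in (0:ℝ)..τ, Real.exp (-β * t) * cost (x t) :=
    fun τ hτ hx hxX => le_exp_mul_add_integral_of_dissipation hτ
      (hV.differentiable one_ne_zero) hx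
      ((hcost.comp (fun t ht => (hx t ht).continuousWithinAt) hxX).integrableOn_Icc)
      fun t ht => closedLoop_dissipation_of_cleared_denominators
        (fderiv ℝ V (x t) : (Fin n → ℝ) →ₗ[ℝ] ℝ) (hρpos _ (hxX t (Ioo_subset_Icc_self ht)))
        (hineq _ (hxX t (Ioo_subset_Icc_self ht)))
  refine ⟨fun hx hxX => ?_, fun τ hτ hx hxX hxτ => ?_⟩
  · obtain ⟨B, hB⟩ := hXc.bddAbove_image hV.continuous.continuousOn
    obtain ⟨C, hC⟩ := hXc.exists_bound_of_continuousOn hcost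
    have hxc : ContinuousOn x (Ici 0) := fun t ht => (hx t ht).continuousWithinAt
    rw [integral_Ici_eq_integral_Ioi]
    refine le_integral_Ioi_of_forall_le_exp_mul_add_intervalIntegral (B := B) hβ ?_ fun τ hτ => ?_
    · exact integrableOn_exp_neg_mul_mul_of_norm_le hβ (hcost.comp hxc hxX)
        fun t ht => hC _ (hxX t ht)
    · calc V (x 0) ≤ _ := hfinite τ hτ (fun t ht => (hx t ht.1).mono Icc_subset_Ici_self)
            fun t ht => hxX t ht.1
        _ ≤ _ := by gcongr; exact hB (mem_image_of_mem V (hxX τ hτ))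
  · calc V (x 0) ≤ _ := hfinite τ hτ hx hxX
      _ ≤ _ := by gcongr; exact hbd _ hxτ

/-- Verification theorem for lower bounds: if `β ρ V − ∇V·f̂ − l̂ ≤ 0` on `X` and `V ≤ M`
on `∂X`, then `V(x(0))` bounds from below the discounted cost of any closed-loop trajectory
of the rational controller `u = σ/ρ`, both for trajectories staying in `X` forever and for
trajectories stopped when hitting `∂X`. -/
theorem value_function_lower_bound_verification {n m : ℕ}
    (X : Set (Fin n → ℝ)) (hXc : IsCompact X)
    (f : (Fin n → ℝ) → (Fin n → ℝ)) (fu : Fin m → (Fin n → ℝ) → (Fin n → ℝ))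
    (lx : (Fin n → ℝ) → ℝ) (lu : Fin m → (Fin n → ℝ) → ℝ)
    (hf : Continuous f) (hfu : ∀ i, Continuous (fu i))
    (hlx : Continuous lx) (hlu : ∀ i, Continuous (lu i))
    (ρ : (Fin n → ℝ) → ℝ) (σ : Fin m → (Fin n → ℝ) → ℝ)
    (hρ : ContDiff ℝ 1 ρ) (hσ : ∀ i, ContDiff ℝ 1 (σ i))
    (hρpos : ∀ x ∈ X, 0 < ρ x)
    (β M : ℝ) (hβ : 0 < β)
    (V : (Fin n → ℝ) → ℝ) (hV : ContDiff ℝ 1 V)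
    (hineq : ∀ x ∈ X, β * ρ x * V x -
      fderiv ℝ V x (ρ x • f x + ∑ i, σ i x • fu i x) -
      (ρ x * lx x + ∑ i, lu i x * σ i x) ≤ 0)
    (hbd : ∀ x ∈ frontier X, V x ≤ M)
    (x : ℝ → (Fin n → ℝ)) :
    ((∀ t ∈ Ici (0:ℝ), HasDerivWithinAt x
        (f (x t) + ∑ i, (σ i (x t) / ρ (x t)) • fu i (x t)) (Ici 0) t) →
      (∀ t ∈ Ici (0:ℝ), x t ∈ X) →
      V (x 0) ≤ ∫ t in Ici (0:ℝ), Real.exp (-β * t) *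
        (lx (x t) + ∑ i, lu i (x t) * (σ i (x t) / ρ (x t)))) ∧
    (∀ τ : ℝ, 0 ≤ τ →
      (∀ t ∈ Icc (0:ℝ) τ, HasDerivWithinAt x
        (f (x t) + ∑ i, (σ i (x t) / ρ (x t)) • fu i (x t)) (Icc 0 τ) t) →
      (∀ t ∈ Icc (0:ℝ) τ, x t ∈ X) → x τ ∈ frontier X →
      V (x 0) ≤ Real.exp (-β * τ) * M + ∫ t in (0:ℝ)..τ, Real.exp (-β * t) *
        (lx (x t) + ∑ i, lu i (x t) * (σ i (x t) / ρ (x t)))) :=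
  value_function_lower_bound_verification_general X hXc f fu lx lu hlx hlu ρ σ hρ hσ hρpos β M hβ V
    hV hineq hbd x
end

section
/- Let X ⊆ ℝⁿ be compact, let f, f_{u_1}, …, f_{u_m} : ℝⁿ → ℝⁿ and l_x, l_{u_1}, …, l_{u_m} : ℝⁿ → ℝ be continuous, let ū > 0, β > 0 and M ∈ ℝ. Suppose V : ℝⁿ → ℝ and p_1, …, p_m : ℝⁿ → ℝ are continuously differentiable and satisfy, for all x ∈ X: (a) l_x(x) − β V(x) + ∇V(x)·f(x) + ū Σ_{i=1}^m p_i(x) ≥ 0; (b) l_{u_i}(x) + ∇V(x)·f_{u_i}(x) − p_i(x) ≥ 0 for i = 1,…,m; (c) p_i(x) ≤ 0 for i = 1,…,m; and (d) V(x) ≤ M for all x ∈ ∂X. Let u : [0,∞) → [0, ū]^m be measurable and let x : [0, τ] → ℝⁿ be differentiable with x′(t) = f(x(t)) + Σ_{i=1}^m f_{u_i}(x(t)) u_i(t). Then: (i) if x(t) ∈ X for all t ≥ 0, then V(x(0)) ≤ ∫_0^∞ e^{−βt} [ l_x(x(t)) + Σ_{i=1}^m l_{u_i}(x(t)) u_i(t)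 ] dt; (ii) if x(t) ∈ X for all t ∈ [0, τ] and x(τ) ∈ ∂X, then V(x(0)) ≤ e^{−βτ} M + ∫_0^τ e^{−βt} [ l_x(x(t)) + Σ_{i=1}^m l_{u_i}(x(t)) u_i(t) ] dt. In particular, V is a lower bound on the optimal value function of the discounted optimal control problem on X with input constraint set [0, ū]^m. -/
/-!
For `v ∈ [0, ū]^m` the Hamiltonian expression `l(y, v) + DV(y)(f(y) + Σ vᵢ f_{uᵢ}(y)) − β V(y)`
equals `(a) + Σ vᵢ (bᵢ) + Σ (ū − vᵢ)(−pᵢ(y))`, hence is nonnegative on `X` by (a)–(c). Along a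
trajectory in `X` this says `−(d/dt)(e^{−βt} V(x t)) ≤ e^{−βt} l(x t, u t)`, and integrating over
`[0, τ]` gives `V(x 0) ≤ e^{−βτ} V(x τ) + ∫₀^τ e^{−βt} l`. At a boundary hitting time (d) bounds
`V(x τ)` by `M`; on an infinite horizon `V` is bounded on the compact `X`, so the first term
vanishes as `τ → ∞`.
-/

open MeasureTheory Set Filter Topology

theorem exp_mul_sub_exp_mul_le_integral {g g' L : ℝ → ℝ} {a b β : ℝ} (hab : a ≤ b)
    (hg : ∀ t ∈ Icc a b, HasDerivWithinAt g (g' t) (Icc a b) t)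
    (hL : IntegrableOn L (Icc a b))
    (hdiss : ∀ t ∈ Ioo a b, Real.exp (-β * t) * (β * g t - g' t) ≤ L t) :
    Real.exp (-β * a) * g a - Real.exp (-β * b) * g b ≤ ∫ t in a..b, L t := by
  have hdisc : ∀ t ∈ Icc a b, HasDerivWithinAt (fun s => -(Real.exp (-β * s) * g s))
      (Real.exp (-β * t) * (β * g t - g' t)) (Icc a b) t := by
    intro t ht
    have hexp := ((hasDerivAt_id' t).const_mul (-β)).exp.hasDerivWithinAt (s := Icc a b)
    exact (hexp.mul (hg t ht)).neg.congr_deriv (by ring)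
  have hftc := intervalIntegral.sub_le_integral_of_hasDeriv_right_of_le hab
    (fun t ht => (hdisc t ht).continuousWithinAt)
    (fun t ht => ((hdisc t (Ioo_subset_Icc_self ht)).hasDerivAt
      (Icc_mem_nhds ht.1 ht.2)).hasDerivWithinAt) hL hdiss
  linarith

theorem le_integral_Ioi_of_forall_le_exp_mul_add_integral {g L : ℝ → ℝ} {c β C : ℝ}
    (hβ : 0 < β) (hg : ∀ T ≥ 0, |g T| ≤ C) (hL : IntegrableOn L (Ioi 0))
    (h : ∀ T ≥ 0, c ≤ Real.exp (-β * T) * g T + ∫ t in (0:ℝ)..T, L t) :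
    c ≤ ∫ t in Ioi 0, L t := by
  have hexp : Tendsto (fun T => Real.exp (-β * T)) atTop (𝓝 0) :=
    Real.tendsto_exp_atBot.comp (tendsto_id.const_mul_atTop_of_neg (neg_neg_iff_pos.2 hβ))
  have hbdd : IsBoundedUnder (· ≤ ·) atTop (fun T => ‖g T‖) :=
    isBoundedUnder_of_eventually_le ((eventually_ge_atTop 0).mono hg)
  have hlim := (hexp.zero_mul_isBoundedUnder_le hbdd).add
    (intervalIntegral_tendsto_integral_Ioi 0 hL tendsto_id)
  rw [zero_add] at hlim
  exact ge_of_tendsto hlim ((eventually_ge_atTop 0).mono h)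

theorem integrableOn_exp_neg_mul_mul {g : ℝ → ℝ} {s : Set ℝ} {β C : ℝ} (hβ : 0 < β)
    (hs : MeasurableSet s) (hs0 : s ⊆ Ici 0) (hg : AEStronglyMeasurable g (volume.restrict s))
    (hC : ∀ t ∈ s, |g t| ≤ C) :
    IntegrableOn (fun t => Real.exp (-β * t) * g t) s := by
  have hexp : IntegrableOn (fun t => Real.exp (-β * t)) s :=
    ((integrableOn_Ici_iff_integrableOn_Ioi).2 (exp_neg_integrableOn_Ioi 0 hβ)).mono_set hs0
  exact hexp.mul_bdd hg ((ae_restrict_iff' hs).2 (ae_of_all _ hC))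

section StageCost

variable {ι E : Type*} [Fintype ι] [TopologicalSpace E]
  {X : Set E} {lx : E → ℝ} {lu : ι → E → ℝ} {ubar β : ℝ}

def stageCost (lx : E → ℝ) (lu : ι → E → ℝ) (y : E) (v : ι → ℝ) : ℝ :=
  lx y + ∑ i, lu i y * v i

theorem exists_abs_stageCost_le (hX : IsCompact X) (hlx : Continuous lx)
    (hlu : ∀ i, Continuous (lu i)) :
    ∃ C, ∀ y ∈ X, ∀ v : ι → ℝ, (∀ i, v i ∈ Icc 0 ubar) → |stageCost lx lu y v| ≤ C := by
  obtain ⟨Cx, hCx⟩ := hX.exists_bound_of_continuousOn hlx.continuousOn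
  choose Cu hCu using fun i => hX.exists_bound_of_continuousOn (hlu i).continuousOn
  refine ⟨Cx + ∑ i, Cu i * |ubar|, fun y hy v hv => ?_⟩
  calc |stageCost lx lu y v| ≤ |lx y| + |∑ i, lu i y * v i| := abs_add_le _ _
    _ ≤ |lx y| + ∑ i, |lu i y| * |v i| := by
        gcongr
        simpa only [abs_mul] using Finset.abs_sum_le_sum_abs (fun i => lu i y * v i) Finset.univ
    _ ≤ Cx + ∑ i, Cu i * |ubar| := by
        gcongr with i
        · exact hCx y hy
        · exact (abs_nonneg _).trans (hCu i y hy)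
        · exact hCu i y hy
        · exact (hv i).1
        · exact (hv i).2

theorem integrableOn_exp_neg_mul_stageCost (hβ : 0 < β) (hX : IsCompact X) (hlx : Continuous lx)
    (hlu : ∀ i, Continuous (lu i)) {x : ℝ → E} {u : ℝ → ι → ℝ} (hum : Measurable u)
    {s : Set ℝ} (hs : MeasurableSet s) (hs0 : s ⊆ Ici 0) (hx : ContinuousOn x s)
    (hmem : ∀ t ∈ s, x t ∈ X) (hu : ∀ t ∈ s, ∀ i, u t i ∈ Icc 0 ubar) :
    IntegrableOn (fun t => Real.exp (-β * t) * stageCost lx lu (x t) (u t)) s := by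
  obtain ⟨C, hC⟩ := exists_abs_stageCost_le (ubar := ubar) hX hlx hlu
  have hmeas : AEMeasurable (fun t => stageCost lx lu (x t) (u t)) (volume.restrict s) :=
    ((hlx.comp_continuousOn hx).aemeasurable hs).add <| Finset.aemeasurable_fun_sum _ fun i _ =>
      ((hlu i).comp_continuousOn hx).aemeasurable hs |>.mul (hum.aemeasurable.eval i)
  exact integrableOn_exp_neg_mul_mul hβ hs hs0 hmeas.aestronglyMeasurable
    fun t ht => hC _ (hmem t ht) _ (hu t ht)

end StageCost

section ControlAffine

variable {ι E : Type*} [Fintype ι] [NormedAddCommGroup E] [NormedSpace ℝ E]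
  {X : Set E} {f : E → E} {fu : ι → E → E} {lx : E → ℝ} {lu : ι → E → ℝ} {ubar β : ℝ}
  {V : E → ℝ} {p : ι → E → ℝ}

def controlField (f : E → E) (fu : ι → E → E) (y : E) (v : ι → ℝ) : E :=
  f y + ∑ i, v i • fu i y

theorem stageCost_add_fderiv_controlField_sub_nonneg {y : E} {v : ι → ℝ}
    (ha : 0 ≤ lx y - β * V y + fderiv ℝ V y (f y) + ubar * ∑ i, p i y)
    (hb : ∀ i, 0 ≤ lu i y + fderiv ℝ V y (fu i y) - p i y)
    (hc : ∀ i, p i y ≤ 0) (hv : ∀ i, v i ∈ Icc 0 ubar) :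
    0 ≤ stageCost lx lu y v + fderiv ℝ V y (controlField f fu y v) - β * V y := by
  have hsplit : stageCost lx lu y v + fderiv ℝ V y (controlField f fu y v) - β * V y =
      (lx y - β * V y + fderiv ℝ V y (f y) + ubar * ∑ i, p i y) +
      ∑ i, (v i * (lu i y + fderiv ℝ V y (fu i y) - p i y) + (ubar - v i) * -p i y) := by
    have hterm : ∀ i, v i * (lu i y + fderiv ℝ V y (fu i y) - p i y) + (ubar - v i) * -p i y =
        lu i y * v i + v i * fderiv ℝ V y (fu i y) - ubar * p i y := fun i => by ring
    simp only [stageCost, controlField, map_add, map_sum, map_smul, smul_eq_mul, hterm,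
      Finset.sum_sub_distrib, Finset.sum_add_distrib, ← Finset.mul_sum]
    ring
  rw [hsplit]
  exact add_nonneg ha (Finset.sum_nonneg fun i _ => add_nonneg
    (mul_nonneg (hv i).1 (hb i)) (mul_nonneg (sub_nonneg.2 (hv i).2) (neg_nonneg.2 (hc i))))

theorem le_exp_mul_add_integral_stageCost (hβ : 0 < β) (hX : IsCompact X)
    (hlx : Continuous lx) (hlu : ∀ i, Continuous (lu i)) (hV : Differentiable ℝ V)
    (ha : ∀ y ∈ X, 0 ≤ lx y - β * V y + fderiv ℝ V y (f y) + ubar * ∑ i, p i y)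
    (hb : ∀ y ∈ X, ∀ i, 0 ≤ lu i y + fderiv ℝ V y (fu i y) - p i y)
    (hc : ∀ y ∈ X, ∀ i, p i y ≤ 0)
    {x : ℝ → E} {u : ℝ → ι → ℝ} (hum : Measurable u) {τ : ℝ} (hτ : 0 ≤ τ)
    (hx : ∀ t ∈ Icc 0 τ, HasDerivWithinAt x (controlField f fu (x t) (u t)) (Icc 0 τ) t)
    (hmem : ∀ t ∈ Icc 0 τ, x t ∈ X) (hu : ∀ t ∈ Icc 0 τ, ∀ i, u t i ∈ Icc 0 ubar) :
    V (x 0) ≤ Real.exp (-β * τ) * V (x τ) +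
      ∫ t in 0..τ, Real.exp (-β * t) * stageCost lx lu (x t) (u t) := by
  have hVx : ∀ t ∈ Icc 0 τ, HasDerivWithinAt (fun s => V (x s))
      (fderiv ℝ V (x t) (controlField f fu (x t) (u t))) (Icc 0 τ) t := fun t ht =>
    (hV (x t)).hasFDerivAt.comp_hasDerivWithinAt t (hx t ht)
  have hdiss := exp_mul_sub_exp_mul_le_integral hτ hVx
    (integrableOn_exp_neg_mul_stageCost hβ hX hlx hlu hum measurableSet_Icc
      (fun t ht => ht.1) (fun t ht => (hx t ht).continuousWithinAt) hmem hu)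
    fun t ht => by
      have hxt := hmem t (Ioo_subset_Icc_self ht)
      have hham := stageCost_add_fderiv_controlField_sub_nonneg (ha _ hxt) (hb _ hxt) (hc _ hxt)
        (hu t (Ioo_subset_Icc_self ht))
      linarith [mul_nonneg (Real.exp_pos (-β * t)).le hham]
  simp only [mul_zero, Real.exp_zero, one_mul] at hdiss
  linarith

end ControlAffine

theorem optimal_value_lower_bound_general {n m : ℕ}
    (X : Set (Fin n → ℝ)) (hXc : IsCompact X)
    (f : (Fin n → ℝ) → (Fin n → ℝ)) (fu : Fin m → (Fin n → ℝ) → (Fin n → ℝ))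
    (lx : (Fin n → ℝ) → ℝ) (lu : Fin m → (Fin n → ℝ) → ℝ)
    (hlx : Continuous lx) (hlu : ∀ i, Continuous (lu i))
    (ubar β M : ℝ) (hβ : 0 < β)
    (V : (Fin n → ℝ) → ℝ) (p : Fin m → (Fin n → ℝ) → ℝ)
    (hV : ContDiff ℝ 1 V)
    (ha : ∀ x ∈ X, 0 ≤ lx x - β * V x + fderiv ℝ V x (f x) + ubar * ∑ i, p i x)
    (hb : ∀ x ∈ X, ∀ i, 0 ≤ lu i x + fderiv ℝ V x (fu i x) - p i x)
    (hc : ∀ x ∈ X, ∀ i, p i x ≤ 0)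
    (hd : ∀ x ∈ frontier X, V x ≤ M)
    (u : ℝ → Fin m → ℝ) (humeas : Measurable u)
    (hu : ∀ t ∈ Ici (0:ℝ), ∀ i, u t i ∈ Icc 0 ubar)
    (x : ℝ → (Fin n → ℝ)) :
    ((∀ t ∈ Ici (0:ℝ), HasDerivWithinAt x
        (f (x t) + ∑ i, u t i • fu i (x t)) (Ici 0) t) →
      (∀ t ∈ Ici (0:ℝ), x t ∈ X) →
      V (x 0) ≤ ∫ t in Ici (0:ℝ), Real.exp (-β * t) *
        (lx (x t) + ∑ i, lu i (x t) * u t i)) ∧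
    (∀ τ : ℝ, 0 ≤ τ →
      (∀ t ∈ Icc (0:ℝ) τ, HasDerivWithinAt x
        (f (x t) + ∑ i, u t i • fu i (x t)) (Icc 0 τ) t) →
      (∀ t ∈ Icc (0:ℝ) τ, x t ∈ X) → x τ ∈ frontier X →
      V (x 0) ≤ Real.exp (-β * τ) * M + ∫ t in (0:ℝ)..τ, Real.exp (-β * t) *
        (lx (x t) + ∑ i, lu i (x t) * u t i)) := by
  have hVd : Differentiable ℝ V := hV.differentiable one_ne_zero
  have hfinite := fun τ (hτ : 0 ≤ τ) hx hmem =>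
    le_exp_mul_add_integral_stageCost (x := x) hβ hXc hlx hlu hVd ha hb hc humeas hτ hx hmem
      fun t ht => hu t ht.1
  refine ⟨fun hx hmem => ?_, fun τ hτ hx hmem hxτ => ?_⟩
  · obtain ⟨CV, hCV⟩ := hXc.exists_bound_of_continuousOn hVd.continuous.continuousOn
    rw [integral_Ici_eq_integral_Ioi]
    refine le_integral_Ioi_of_forall_le_exp_mul_add_integral hβ
      (fun T hT => hCV _ (hmem T hT))
      (integrableOn_exp_neg_mul_stageCost hβ hXc hlx hlu humeas measurableSet_Ioi
        Ioi_subset_Ici_self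
        (fun t ht => (hx t (Ioi_subset_Ici_self ht)).continuousWithinAt.mono Ioi_subset_Ici_self)
        (fun t ht => hmem t (Ioi_subset_Ici_self ht)) fun t ht => hu t (Ioi_subset_Ici_self ht))
      fun T hT => hfinite T hT
        (fun t ht => (hx t ht.1).mono Icc_subset_Ici_self) fun t ht => hmem t ht.1
  · have hMτ := mul_le_mul_of_nonneg_left (hd _ hxτ) (Real.exp_pos (-β * τ)).le
    exact (hfinite τ hτ hx hmem).trans (add_le_add_left hMτ _)

/-- Lower bound on the optimal value function of the discounted optimal control problem:
if `V, p₁, …, p_m` satisfy the SOS-type inequalities (a)–(d) pointwise on `X`, then `V(x(0))`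
is a lower bound on the discounted cost of any admissible trajectory with measurable
open-loop control `u(t) ∈ [0, ū]^m`, both for trajectories staying in `X` forever and
for trajectories stopped upon hitting `∂X`. -/
theorem optimal_value_lower_bound {n m : ℕ}
    (X : Set (Fin n → ℝ)) (hXc : IsCompact X)
    (f : (Fin n → ℝ) → (Fin n → ℝ)) (fu : Fin m → (Fin n → ℝ) → (Fin n → ℝ))
    (lx : (Fin n → ℝ) → ℝ) (lu : Fin m → (Fin n → ℝ) → ℝ)
    (hf : Continuous f) (hfu : ∀ i, Continuous (fu i))
    (hlx : Continuous lx) (hlu : ∀ i, Continuous (lu i))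
    (ubar β M : ℝ) (hubar : 0 < ubar) (hβ : 0 < β)
    (V : (Fin n → ℝ) → ℝ) (p : Fin m → (Fin n → ℝ) → ℝ)
    (hV : ContDiff ℝ 1 V) (hp : ∀ i, ContDiff ℝ 1 (p i))
    (ha : ∀ x ∈ X, 0 ≤ lx x - β * V x + fderiv ℝ V x (f x) + ubar * ∑ i, p i x)
    (hb : ∀ x ∈ X, ∀ i, 0 ≤ lu i x + fderiv ℝ V x (fu i x) - p i x)
    (hc : ∀ x ∈ X, ∀ i, p i x ≤ 0)
    (hd : ∀ x ∈ frontier X, V x ≤ M)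
    (u : ℝ → Fin m → ℝ) (humeas : Measurable u)
    (hu : ∀ t ∈ Ici (0:ℝ), ∀ i, u t i ∈ Icc 0 ubar)
    (x : ℝ → (Fin n → ℝ)) :
    ((∀ t ∈ Ici (0:ℝ), HasDerivWithinAt x
        (f (x t) + ∑ i, u t i • fu i (x t)) (Ici 0) t) →
      (∀ t ∈ Ici (0:ℝ), x t ∈ X) →
      V (x 0) ≤ ∫ t in Ici (0:ℝ), Real.exp (-β * t) *
        (lx (x t) + ∑ i, lu i (x t) * u t i)) ∧
    (∀ τ : ℝ, 0 ≤ τ →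
      (∀ t ∈ Icc (0:ℝ) τ, HasDerivWithinAt x
        (f (x t) + ∑ i, u t i • fu i (x t)) (Icc 0 τ) t) →
      (∀ t ∈ Icc (0:ℝ) τ, x t ∈ X) → x τ ∈ frontier X →
      V (x 0) ≤ Real.exp (-β * τ) * M + ∫ t in (0:ℝ)..τ, Real.exp (-β * t) *
        (lx (x t) + ∑ i, lu i (x t) * u t i)) :=
  optimal_value_lower_bound_general X hXc f fu lx lu hlx hlu ubar β M hβ V p hV ha hb hc hd u humeas
    hu x
end
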